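/- arXiv:1404.5465 — 5 statements merged into one kernel-verified Lean document; each statement's English description precedes it below -/
import Mathlib

section
/- (Theorem 1(i)) In the single-area nested-error model with log transformation, for every out-of-sample unit i ∈ {n_d+1,…,N_d}, the conditional expectation of exp(y_{di}) given the σ-algebra generated by the sample responses y_{d1},…,y_{dn_d} equals, almost surely, exp(ỹ_{di} + α_d), where ỹ_{di} = x_{di}'β + γ_d(ȳ_{ds} − x̄_{ds}'β), γ_d = σu²/(σu² + σe²/n_d), α_d = (1/2)(σu²(1−γ_d) + σe²), ȳ_{ds} = n_d^{-1} Σ_{i=1}^{n_d} y_{di}, and x̄_{ds} = n_d^{-1} Σ_{i=1}^{n_d} x_{di}. -/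
open MeasureTheory ProbabilityTheory Matrix

/-!
Write `T = (u, e_1, …, e_N)`, a centred Gaussian vector with independent coordinates; every
response is an affine function of `T`. The prediction error `y_i - ỹ_i` is a linear form in `T`
which, because `γ_d (σu² + σe² / n_d) = σu²`, is uncorrelated with every sample response. Being
jointly Gaussian with the sample, it is therefore independent of it, so
`E[exp y_i | sample] = exp ỹ_i · E[exp (y_i - ỹ_i)] = exp (ỹ_i + Var (y_i - ỹ_i) / 2)`, and
`Var (y_i - ỹ_i) = σu² (1 - γ_d) + σe² = 2 α_d`.
-/

namespace ProbabilityTheory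

variable {Ω ι : Type*} [MeasurableSpace Ω] {P : Measure Ω} [Fintype ι]

lemma condExp_mul_of_indepFun [IsFiniteMeasure P] {β : Type*} [mβ : MeasurableSpace β]
    {Y : Ω → β} {f g : Ω → ℝ} (hY : Measurable Y) (hf : StronglyMeasurable[mβ.comap Y] f)
    (hg : Measurable g) (hind : IndepFun g Y P) (hfg : Integrable (f * g) P)
    (hgi : Integrable g P) :
    P[f * g | mβ.comap Y] =ᵐ[P] fun ω ↦ f ω * P[g] := by
  have hgg : StronglyMeasurable[MeasurableSpace.comap g inferInstance] g :=
    (Measurable.of_comap_le le_rfl).stronglyMeasurable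
  filter_upwards [condExp_mul_of_stronglyMeasurable_left hf hfg hgi,
    condExp_indep_eq hg.comap_le hY.comap_le hgg ((IndepFun_iff_Indep g Y P).mp hind)]
    with ω hpull hconst
  rw [hpull, Pi.mul_apply, hconst]

section Family

variable {X : ι → Ω → ℝ}

lemma integral_dotProduct (hX : ∀ i, Integrable (X i) P) (c : ι → ℝ) :
    P[fun ω ↦ c ⬝ᵥ fun i ↦ X i ω] = c ⬝ᵥ fun i ↦ P[X i] := by
  simp only [dotProduct]
  rw [integral_finsetSum _ fun i _ ↦ (hX i).const_mul (c i)]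
  simp only [integral_const_mul]

lemma covariance_dotProduct_of_iIndepFun [IsFiniteMeasure P] (hX : ∀ i, MemLp (X i) 2 P)
    (hind : iIndepFun X P) (c d : ι → ℝ) :
    cov[fun ω ↦ c ⬝ᵥ fun i ↦ X i ω, fun ω ↦ d ⬝ᵥ fun i ↦ X i ω; P]
      = c ⬝ᵥ ((fun i ↦ Var[X i; P]) * d) := by
  classical
  simp only [dotProduct]
  rw [covariance_fun_sum_fun_sum (fun i ↦ (hX i).const_mul (c i))
    (fun j ↦ (hX j).const_mul (d j))]
  refine Finset.sum_congr rfl fun i _ ↦ ?_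
  rw [Finset.sum_eq_single_of_mem i (Finset.mem_univ i) fun j _ hji ↦ ?_]
  · rw [covariance_const_mul_left, covariance_const_mul_right,
      covariance_self (hX i).aestronglyMeasurable.aemeasurable, Pi.mul_apply]
    ring
  · rw [covariance_const_mul_left, covariance_const_mul_right,
      (hind.indepFun hji.symm).covariance_eq_zero (hX i) (hX j), mul_zero, mul_zero]

end Family

namespace HasGaussianLaw

lemma integrable_exp {Z : Ω → ℝ} (hZ : HasGaussianLaw Z P) :
    Integrable (fun ω ↦ Real.exp (Z ω)) P := by
  have h := integrable_exp_mul_gaussianReal (μ := P[Z]) (v := Var[Z; P].toNNReal) 1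
  rw [← hZ.map_eq_gaussianReal, integrable_map_measure (by fun_prop) hZ.aemeasurable] at h
  simpa [Function.comp_def] using h

lemma integral_exp {Z : Ω → ℝ} (hZ : HasGaussianLaw Z P) :
    P[fun ω ↦ Real.exp (Z ω)] = Real.exp (P[Z] + Var[Z; P] / 2) := by
  have h := mgf_gaussianReal hZ.map_eq_gaussianReal 1
  simpa [mgf, Real.coe_toNNReal _ (variance_nonneg Z P)] using h

variable {X : Ω → ι → ℝ}

lemma dotProduct (hX : HasGaussianLaw X P) (c : ι → ℝ) :
    HasGaussianLaw (fun ω ↦ c ⬝ᵥ X ω) P :=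
  hX.map_fun (LinearMap.toContinuousLinearMap (dotProductBilin ℝ ℝ c))

lemma indepFun_dotProduct {κ : Type*} [Fintype κ] (hX : HasGaussianLaw X P)
    (a : ι → ℝ) (b : κ → ι → ℝ)
    (hcov : ∀ k, cov[fun ω ↦ a ⬝ᵥ X ω, fun ω ↦ b k ⬝ᵥ X ω; P] = 0) :
    IndepFun (fun ω ↦ a ⬝ᵥ X ω) (fun ω k ↦ b k ⬝ᵥ X ω) P := by
  let L : (ι → ℝ) →ₗ[ℝ] (Unit → ℝ) × (κ → ℝ) :=
    (mulVecLin (Matrix.of fun _ : Unit ↦ a)).prod (mulVecLin (Matrix.of b))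
  have hpair : HasGaussianLaw (fun ω ↦ (fun _ : Unit ↦ a ⬝ᵥ X ω, fun k ↦ b k ⬝ᵥ X ω)) P :=
    hX.map_fun (LinearMap.toContinuousLinearMap L)
  exact (hpair.indepFun_of_covariance_eval fun _ k ↦ hcov k).comp
    (measurable_pi_apply ()) measurable_id

theorem condExp_exp_add_dotProduct {κ : Type*} [Fintype κ]
    (hX : HasGaussianLaw X P) (hXm : Measurable X)
    {Y : Ω → κ → ℝ} (c : κ → ℝ) (b : κ → ι → ℝ) (hY : ∀ ω k, Y ω k = c k + b k ⬝ᵥ X ω)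
    {f : (κ → ℝ) → ℝ} (hf : Measurable f) (a : ι → ℝ)
    (hcov : ∀ k, cov[fun ω ↦ a ⬝ᵥ X ω, fun ω ↦ b k ⬝ᵥ X ω; P] = 0)
    (hint : Integrable (fun ω ↦ Real.exp (f (Y ω) + a ⬝ᵥ X ω)) P) :
    P[fun ω ↦ Real.exp (f (Y ω) + a ⬝ᵥ X ω) | MeasurableSpace.comap Y inferInstance]
      =ᵐ[P] fun ω ↦ Real.exp
        (f (Y ω) + (P[fun ω ↦ a ⬝ᵥ X ω] + Var[fun ω ↦ a ⬝ᵥ X ω; P] / 2)) := by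
  have := hX.isProbabilityMeasure
  have hlin : ∀ d : ι → ℝ, Measurable fun ω ↦ d ⬝ᵥ X ω := fun d ↦
    (continuous_const.dotProduct continuous_id).measurable.comp hXm
  have hYeq : Y = (fun t k ↦ c k + t k) ∘ fun ω k ↦ b k ⬝ᵥ X ω :=
    funext fun ω ↦ funext (hY ω)
  have hYm : Measurable Y :=
    hYeq ▸ (by fun_prop : Measurable fun (t : κ → ℝ) k ↦ c k + t k).comp
      (measurable_pi_lambda _ fun k ↦ hlin (b k))
  have hind : IndepFun (fun ω ↦ Real.exp (a ⬝ᵥ X ω)) Y P :=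
    hYeq ▸ (hX.indepFun_dotProduct a b hcov).comp Real.measurable_exp (by fun_prop)
  have hfY : StronglyMeasurable[MeasurableSpace.comap Y inferInstance]
      fun ω ↦ Real.exp (f (Y ω)) :=
    (hf.comp (Measurable.of_comap_le le_rfl)).exp.stronglyMeasurable
  have hsplit : (fun ω ↦ Real.exp (f (Y ω) + a ⬝ᵥ X ω))
      = (fun ω ↦ Real.exp (f (Y ω))) * fun ω ↦ Real.exp (a ⬝ᵥ X ω) :=
    funext fun ω ↦ Real.exp_add _ _
  rw [hsplit] at hint ⊢
  filter_upwards [condExp_mul_of_indepFun hYm hfY (hlin a).exp hind hint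
    (hX.dotProduct a).integrable_exp] with ω hω
  rw [hω, (hX.dotProduct a).integral_exp, ← Real.exp_add]

end HasGaussianLaw

end ProbabilityTheory

/-! Coefficient vectors are taken with respect to `(u, e_1, …, e_N)`, indexed by
`Option (Fin Nd)` with `none` standing for `u`; `c ⬝ᵥ (variances σu2 σe2 * d)` is then the
covariance of the linear forms with coefficients `c` and `d`, and the lemmas named `…_cov_…`
evaluate it. -/

namespace NestedErrorModel

variable {nd Nd : ℕ} (hNd : nd ≤ Nd) (σu2 σe2 : ℝ)

def unitCoeff (j : Fin Nd) : Option (Fin Nd) → ℝ := Pi.single none 1 + Pi.single (some j) 1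

noncomputable def sampleMeanCoeff : Option (Fin Nd) → ℝ :=
  (nd : ℝ)⁻¹ • ∑ k : Fin nd, unitCoeff (Fin.castLE hNd k)

noncomputable def residualCoeff (γ : ℝ) (i : Fin Nd) : Option (Fin Nd) → ℝ :=
  unitCoeff i - γ • sampleMeanCoeff hNd

def variances : Option (Fin Nd) → ℝ := fun o ↦ o.elim σu2 fun _ ↦ σe2

noncomputable def predictor {p : ℕ} (x : Fin Nd → Fin p → ℝ) (β : Fin p → ℝ) (γ : ℝ)
    (i : Fin Nd) (z : Fin nd → ℝ) : ℝ :=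
  x i ⬝ᵥ β + γ * ((nd : ℝ)⁻¹ * ∑ k, z k - ((nd : ℝ)⁻¹ • ∑ k, x (Fin.castLE hNd k)) ⬝ᵥ β)

@[simp]
lemma unitCoeff_dotProduct (j : Fin Nd) (t : Option (Fin Nd) → ℝ) :
    unitCoeff j ⬝ᵥ t = t none + t (some j) := by
  simp [unitCoeff, add_dotProduct]

lemma sampleMeanCoeff_dotProduct (t : Option (Fin Nd) → ℝ) :
    sampleMeanCoeff hNd ⬝ᵥ t = (nd : ℝ)⁻¹ * ∑ k, unitCoeff (Fin.castLE hNd k) ⬝ᵥ t := by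
  rw [sampleMeanCoeff, smul_dotProduct, sum_dotProduct, smul_eq_mul]

lemma unitCoeff_cov (j k : Fin Nd) :
    unitCoeff j ⬝ᵥ (variances σu2 σe2 * unitCoeff k) = σu2 + if j = k then σe2 else 0 := by
  simp [variances, unitCoeff, Pi.single_apply, eq_comm]

lemma y_eq_predictor_add_residual {Ω : Type*} {p : ℕ} {x : Fin Nd → Fin p → ℝ}
    {β : Fin p → ℝ} {u : Ω → ℝ} {e : Fin Nd → Ω → ℝ} {y : Fin Nd → Ω → ℝ}
    (hy : ∀ j ω, y j ω = x j ⬝ᵥ β + u ω + e j ω) (γ : ℝ) (i : Fin Nd) (ω : Ω) :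
    y i ω = predictor hNd x β γ i (fun k ↦ y (Fin.castLE hNd k) ω)
      + residualCoeff hNd γ i ⬝ᵥ fun o ↦ o.elim u e ω := by
  simp only [predictor, residualCoeff, sub_dotProduct, smul_dotProduct,
    sampleMeanCoeff_dotProduct, unitCoeff_dotProduct, sum_dotProduct, hy,
    Finset.sum_add_distrib, smul_eq_mul, Option.elim_none, Option.elim_some]
  ring

variable {σu2 σe2 hNd}

lemma sampleMeanCoeff_cov_castLE (hnd : nd ≠ 0) (k : Fin nd) :
    sampleMeanCoeff hNd ⬝ᵥ (variances σu2 σe2 * unitCoeff (Fin.castLE hNd k))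
      = σu2 + σe2 / nd := by
  simp only [sampleMeanCoeff_dotProduct, unitCoeff_cov, Fin.castLE_inj, Finset.sum_add_distrib,
    Finset.sum_ite_eq', Finset.mem_univ, if_true, Finset.sum_const, Finset.card_univ,
    Fintype.card_fin, nsmul_eq_mul]
  field_simp

lemma sampleMeanCoeff_cov_of_le (hnd : nd ≠ 0) {j : Fin Nd} (hj : nd ≤ j) :
    sampleMeanCoeff hNd ⬝ᵥ (variances σu2 σe2 * unitCoeff j) = σu2 := by
  have hne : ∀ k : Fin nd, Fin.castLE hNd k ≠ j := fun k h ↦ by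
    have := k.isLt
    rw [← h, Fin.val_castLE] at hj
    omega
  simp only [sampleMeanCoeff_dotProduct, unitCoeff_cov, hne, if_false, add_zero,
    Finset.sum_const, Finset.card_univ, Fintype.card_fin, nsmul_eq_mul]
  field_simp

variable {γ : ℝ} {i : Fin Nd}

lemma residualCoeff_cov_castLE (hnd : nd ≠ 0) (hγ : γ * (σu2 + σe2 / nd) = σu2)
    (hi : nd ≤ i) (k : Fin nd) :
    residualCoeff hNd γ i ⬝ᵥ (variances σu2 σe2 * unitCoeff (Fin.castLE hNd k)) = 0 := by
  have hne : i ≠ Fin.castLE hNd k := fun h ↦ by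
    have := k.isLt
    rw [h, Fin.val_castLE] at hi
    omega
  rw [residualCoeff, sub_dotProduct, smul_dotProduct, unitCoeff_cov, if_neg hne,
    sampleMeanCoeff_cov_castLE hnd, smul_eq_mul, add_zero, hγ, sub_self]

lemma residualCoeff_cov_self (hnd : nd ≠ 0) (hγ : γ * (σu2 + σe2 / nd) = σu2)
    (hi : nd ≤ i) :
    residualCoeff hNd γ i ⬝ᵥ (variances σu2 σe2 * residualCoeff hNd γ i)
      = σu2 * (1 - γ) + σe2 := by
  have hmean : residualCoeff hNd γ i ⬝ᵥ (variances σu2 σe2 * sampleMeanCoeff hNd) = 0 := by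
    simp only [sampleMeanCoeff, mul_smul_comm, Finset.mul_sum, dotProduct_smul, dotProduct_sum,
      residualCoeff_cov_castLE hnd hγ hi, Finset.sum_const_zero, smul_zero]
  rw [residualCoeff, mul_sub, mul_smul_comm, dotProduct_sub, dotProduct_smul, ← residualCoeff,
    hmean, smul_zero, sub_zero, residualCoeff, sub_dotProduct, smul_dotProduct, unitCoeff_cov,
    if_pos rfl, sampleMeanCoeff_cov_of_le hnd hi, smul_eq_mul]
  ring

end NestedErrorModel

open NestedErrorModel

/-- Theorem 1(i): in the single-area nested-error model with log transformation, the best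
predictor of `w_{di} = exp(y_{di})` for an out-of-sample unit `i`, i.e. the conditional
expectation of `exp(y_{di})` given the sample responses, equals `exp(ỹ_{di} + α_d)` a.s. -/
theorem best_predictor_exp_y
    {Ω : Type} [MeasurableSpace Ω] (P : Measure Ω) [IsProbabilityMeasure P]
    (p nd Nd : ℕ) (hnd : 1 ≤ nd) (hNd : nd < Nd)
    (σu2 σe2 : ℝ) (hσu : 0 ≤ σu2) (hσe : 0 < σe2)
    (x : Fin Nd → Fin p → ℝ) (β : Fin p → ℝ)
    (u : Ω → ℝ) (e : Fin Nd → Ω → ℝ)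
    (hum : Measurable u) (hem : ∀ i, Measurable (e i))
    (hu : P.map u = gaussianReal 0 σu2.toNNReal)
    (he : ∀ i, P.map (e i) = gaussianReal 0 σe2.toNNReal)
    (hind : iIndepFun
      (fun o : Option (Fin Nd) => o.elim u e) P)
    (y : Fin Nd → Ω → ℝ) (hy : ∀ i ω, y i ω = x i ⬝ᵥ β + u ω + e i ω)
    (γd αd : ℝ)
    (hγ : γd = σu2 / (σu2 + σe2 / nd))
    (hα : αd = (1 / 2) * (σu2 * (1 - γd) + σe2))
    (i : Fin Nd) (hi : nd ≤ (i : ℕ)) :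
    P[(fun ω => Real.exp (y i ω)) |
        MeasurableSpace.comap
          (fun ω => fun k : Fin nd => y (Fin.castLE hNd.le k) ω) inferInstance]
      =ᵐ[P]
    fun ω => Real.exp
      ((x i ⬝ᵥ β
          + γd * (((nd : ℝ)⁻¹ * ∑ k : Fin nd, y (Fin.castLE hNd.le k) ω)
              - ((nd : ℝ)⁻¹ • ∑ k : Fin nd, x (Fin.castLE hNd.le k)) ⬝ᵥ β))
        + αd) := by
  have hnd0 : nd ≠ 0 := by omega
  have hreg : γd * (σu2 + σe2 / nd) = σu2 := by
    rw [hγ]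
    exact div_mul_cancel₀ _ (add_pos_of_nonneg_of_pos hσu
      (div_pos hσe (Nat.cast_pos.mpr (by omega)))).ne'
  set X : Option (Fin Nd) → Ω → ℝ := fun o ↦ o.elim u e
  have hXm : ∀ o, Measurable (X o) := (Option.rec hum hem ·)
  have hX : ∀ o, HasLaw (X o) (gaussianReal 0 (variances σu2 σe2 o).toNNReal) P :=
    (Option.rec ⟨hum.aemeasurable, hu⟩ (fun j ↦ ⟨(hem j).aemeasurable, he j⟩) ·)
  have hvar : (fun o ↦ Var[X o; P]) = variances σu2 σe2 := funext fun o ↦ by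
    rw [(hX o).variance_eq, variance_id_gaussianReal, Real.coe_toNNReal]
    exact Option.rec hσu (fun _ ↦ hσe.le) o
  have hcov := covariance_dotProduct_of_iIndepFun (fun o ↦ (hX o).hasGaussianLaw.memLp_two) hind
  have hT : HasGaussianLaw (fun ω o ↦ X o ω) P := hind.hasGaussianLaw fun o ↦ (hX o).hasGaussianLaw
  have hint : Integrable (fun ω ↦ Real.exp (y i ω)) P := by
    have h := (hT.dotProduct (unitCoeff i)).integrable_exp.const_mul (Real.exp (x i ⬝ᵥ β))
    simpa [← Real.exp_add, hy, X, add_assoc] using h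
  simp only [y_eq_predictor_add_residual hNd.le hy γd i] at hint ⊢
  refine (hT.condExp_exp_add_dotProduct (measurable_pi_lambda _ hXm)
    (fun k ↦ x (Fin.castLE hNd.le k) ⬝ᵥ β) (fun k ↦ unitCoeff (Fin.castLE hNd.le k))
    (fun ω k ↦ by simp [hy, X, add_assoc]) (by unfold predictor; fun_prop) _
    (fun k ↦ by rw [hcov, hvar, residualCoeff_cov_castLE hnd0 hreg hi]) hint).trans
    (.of_eq (funext fun ω ↦ ?_))
  rw [integral_dotProduct (fun o ↦ (hX o).hasGaussianLaw.integrable),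
    ← covariance_self (hT.dotProduct _).aemeasurable, hcov, hvar,
    residualCoeff_cov_self hnd0 hreg hi, hα]
  simp [(hX _).integral_eq, predictor]
  ring
end

section
/- (Theorem 1(ii)) In the single-area nested-error model with log transformation, the conditional expectation of the area mean τ_d = N_d^{-1} Σ_{i=1}^{N_d} exp(y_{di}) given the σ-algebra generated by the sample responses y_{d1},…,y_{dn_d} equals, almost surely, τ̃_d = N_d^{-1}( Σ_{i=1}^{n_d} exp(y_{di}) + Σ_{i=n_d+1}^{N_d} exp(ỹ_{di} + α_d) ), where ỹ_{di} = x_{di}'β + γ_d(ȳ_{ds} − x̄_{ds}'β), γ_d = σu²/(σu² + σe²/n_d), α_d = (1/2)(σu²(1−γ_d) + σe²), ȳ_{ds} = n_d^{-1} Σ_{i=1}^{n_d} y_{di}, and x̄_{ds} = n_d^{-1} Σ_{i=1}^{n_d} x_{di}. -/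
/-!
Conditional expectations given the sample `S = (y_k)_{k ∈ s_d}` are identified through the
integrals `E[1_B(S) ·]`. For an out-of-sample unit `i`, both `E[1_B(S) exp y_i]` and
`E[1_B(S) exp (ỹ_i + α_d)]` are exponential moments `E[exp ⟨c, Z⟩ F(Z)]` of the independent
Gaussian vector `Z = (u, e)`, and exponential tilting (Cameron–Martin) rewrites these as
`exp (∑ c_j² s_j / 2) E[F(Z + c s)]`. The tilts `c = (1; 1 at e_i)` and
`c = (γ_d; γ_d / n_d at each sampled e_k)` shift every sampled response by the same amount `σu²`,
because `γ_d (σu² + σe² / n_d) = σu²`, and their constants agree because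
`α_d = (σu² (1 - γ_d) + σe²) / 2`. Sampled units are measurable for the sample σ-algebra, and
linearity of conditional expectation assembles the area mean.
-/

open MeasureTheory ProbabilityTheory Matrix
open scoped ENNReal NNReal

theorem gaussianPDFReal_mul_exp (s : ℝ≥0) (hs : s ≠ 0) (c x : ℝ) :
    gaussianPDFReal 0 s x * Real.exp (c * x - c ^ 2 * s / 2) = gaussianPDFReal (c * s) s x := by
  have hs' : (s : ℝ) ≠ 0 := by exact_mod_cast hs
  simp only [gaussianPDFReal, mul_assoc, ← Real.exp_add]
  congr 2
  field_simp
  ring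

theorem gaussianReal_withDensity_exp (s : ℝ≥0) (c : ℝ) :
    (gaussianReal 0 s).withDensity (fun x => ENNReal.ofReal (Real.exp (c * x - c ^ 2 * s / 2)))
      = gaussianReal (c * s) s := by
  rcases eq_or_ne s 0 with rfl | hs
  · ext A hA
    classical
    simp [gaussianReal_zero_var, withDensity_apply _ hA, setLIntegral_dirac, Set.indicator_apply]
  rw [gaussianReal_of_var_ne_zero _ hs, gaussianReal_of_var_ne_zero _ hs,
    ← withDensity_mul _ (measurable_gaussianPDF _ _) (by fun_prop)]
  congr 1 with x
  simp only [Pi.mul_apply, gaussianPDF, ← ENNReal.ofReal_mul (gaussianPDFReal_nonneg _ _ _),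
    gaussianPDFReal_mul_exp s hs]

theorem ProbabilityTheory.iIndepFun.withDensity_map_eq_pi {Ω ι : Type*} [MeasurableSpace Ω]
    {P : Measure Ω} [Fintype ι] {β : ι → Type*} [∀ i, MeasurableSpace (β i)]
    {X : ∀ i, Ω → β i} (hX : iIndepFun X P) (hXm : ∀ i, Measurable (X i))
    {f : ∀ i, β i → ℝ≥0∞} (hf : ∀ i, Measurable (f i))
    [∀ i, SigmaFinite ((P.map (X i)).withDensity (f i))] :
    (P.map fun ω i => X i ω).withDensity (fun x => ∏ i, f i (x i))
      = Measure.pi fun i => (P.map (X i)).withDensity (f i) := by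
  refine (Measure.pi_eq fun A hA => ?_).symm
  have hindicator : (Set.univ.pi A).indicator (fun x => ∏ i, f i (x i))
      = fun x => ∏ i, (A i).indicator (f i) (x i) := by
    ext x
    classical
    simp only [Set.indicator_apply, Set.mem_univ_pi, Finset.prod_ite_zero, Finset.mem_univ,
      true_imp_iff]
  have hfA : ∀ i, Measurable ((A i).indicator (f i)) := fun i => (hf i).indicator (hA i)
  rw [withDensity_apply _ (.univ_pi hA), ← lintegral_indicator (.univ_pi hA), hindicator,
    lintegral_map (by fun_prop) (measurable_pi_lambda _ hXm)]
  refine (lintegral_prod_eq_prod_lintegral_of_indepFun Finset.univ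
    (fun i => (A i).indicator (f i) ∘ X i) (hX.comp _ hfA) fun i => (hfA i).comp (hXm i)).trans
    (Finset.prod_congr rfl fun i _ => ?_)
  rw [withDensity_apply _ (hA i), ← lintegral_indicator (hA i), lintegral_map (hfA i) (hXm i)]
  rfl

theorem lintegral_exp_sum_mul_of_iIndepFun_gaussianReal {Ω ι : Type*} [MeasurableSpace Ω]
    {P : Measure Ω} [IsProbabilityMeasure P] [Fintype ι] {X : ι → Ω → ℝ} (hX : iIndepFun X P)
    (hXm : ∀ i, Measurable (X i)) {s : ι → ℝ≥0} (hlaw : ∀ i, P.map (X i) = gaussianReal 0 (s i))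
    (c : ι → ℝ) {F : (ι → ℝ) → ℝ≥0∞} (hF : Measurable F) :
    ∫⁻ ω, ENNReal.ofReal (Real.exp (∑ i, c i * X i ω)) * F (fun i => X i ω) ∂P
      = ENNReal.ofReal (Real.exp (∑ i, c i ^ 2 * s i / 2))
        * ∫⁻ ω, F (fun i => X i ω + c i * s i) ∂P := by
  set k := ENNReal.ofReal (Real.exp (∑ i, c i ^ 2 * s i / 2))
  set d : (ι → ℝ) → ℝ≥0∞ := fun x => ∏ i, ENNReal.ofReal (Real.exp (c i * x i - c i ^ 2 * s i / 2))
  have hXv : Measurable fun ω i => X i ω := measurable_pi_lambda _ hXm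
  have hd : Measurable d := by fun_prop
  have hexp : ∀ x : ι → ℝ, ENNReal.ofReal (Real.exp (∑ i, c i * x i)) = k * d x := by
    intro x
    simp only [k, d]
    rw [← ENNReal.ofReal_prod_of_nonneg fun i _ => (Real.exp_pos _).le, ← Real.exp_sum,
      ← ENNReal.ofReal_mul (Real.exp_pos _).le, ← Real.exp_add, Finset.sum_sub_distrib,
      add_sub_cancel]
  have hpi : P.map (fun ω i => X i ω) = Measure.pi fun i => gaussianReal 0 (s i) := by
    rw [(iIndepFun_iff_map_fun_eq_pi_map fun i => (hXm i).aemeasurable).1 hX]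
    simp_rw [hlaw]
  have htilt : (P.map fun ω i => X i ω).withDensity d
      = (Measure.pi fun i => gaussianReal 0 (s i)).map fun x i => x i + c i * s i := by
    rw [hX.withDensity_map_eq_pi hXm (f := fun i y => ENNReal.ofReal
        (Real.exp (c i * y - c i ^ 2 * s i / 2))) fun i => by fun_prop,
      Measure.pi_map_pi (f := fun i y => y + c i * s i) fun i => by fun_prop]
    congr 1 with i : 1
    rw [hlaw, gaussianReal_withDensity_exp, gaussianReal_map_add_const, zero_add]
  calc ∫⁻ ω, ENNReal.ofReal (Real.exp (∑ i, c i * X i ω)) * F (fun i => X i ω) ∂P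
      = k * ∫⁻ x, d x * F x ∂(P.map fun ω i => X i ω) := by
        simp_rw [hexp, mul_assoc]
        rw [lintegral_const_mul (f := fun ω => d (fun i => X i ω) * F (fun i => X i ω)) _
          ((hd.mul hF).comp hXv)]
        exact congrArg (k * ·) (lintegral_map (hd.mul hF) hXv).symm
    _ = k * ∫⁻ x, F (fun i => x i + c i * s i) ∂(Measure.pi fun i => gaussianReal 0 (s i)) := by
        rw [← lintegral_map hF (by fun_prop), ← htilt]
        exact congrArg (k * ·) (lintegral_withDensity_eq_lintegral_mul _ hd hF).symm
    _ = k * ∫⁻ ω, F (fun i => X i ω + c i * s i) ∂P := by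
        rw [← hpi, lintegral_map (by fun_prop) hXv]

theorem condExp_comap_ae_eq_of_setLIntegral_eq {Ω β : Type*} [MeasurableSpace Ω]
    [MeasurableSpace β] {P : Measure Ω} [IsFiniteMeasure P] {S : Ω → β} (hS : Measurable S)
    {f : Ω → ℝ} (hf : Integrable f P) (hf0 : 0 ≤ᵐ[P] f) {g : β → ℝ} (hg : Measurable g)
    (hg0 : 0 ≤ g)
    (h : ∀ B, MeasurableSet B → ∫⁻ ω in S ⁻¹' B, ENNReal.ofReal (f ω) ∂P
      = ∫⁻ ω in S ⁻¹' B, ENNReal.ofReal (g (S ω)) ∂P) :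
    P[f | MeasurableSpace.comap S inferInstance] =ᵐ[P] fun ω => g (S ω) := by
  have hgS : Integrable (fun ω => g (S ω)) P := by
    refine ⟨(hg.comp hS).aestronglyMeasurable, ?_⟩
    rw [hasFiniteIntegral_iff_ofReal (ae_of_all _ fun ω => hg0 (S ω))]
    have huniv := h Set.univ .univ
    simp only [Set.preimage_univ, Measure.restrict_univ] at huniv
    exact huniv ▸ hf.lintegral_lt_top
  refine (ae_eq_condExp_of_forall_setIntegral_eq hS.comap_le hf (fun _ _ _ => hgS.integrableOn)
    ?_ (hg.comp (comap_measurable S)).aestronglyMeasurable).symm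
  rintro _ ⟨B, hB, rfl⟩ -
  rw [integral_eq_lintegral_of_nonneg_ae (ae_of_all _ fun ω => hg0 (S ω))
      (hg.comp hS).aestronglyMeasurable.restrict,
    integral_eq_lintegral_of_nonneg_ae (ae_restrict_of_ae hf0) hf.1.restrict, h B hB]

theorem condExp_const_mul_finsetSum {Ω ι : Type*} {m₀ : MeasurableSpace Ω} {P : Measure Ω}
    (m : MeasurableSpace Ω) (c : ℝ) (s : Finset ι) {f : ι → Ω → ℝ}
    (hf : ∀ i ∈ s, Integrable (f i) P) :
    P[fun ω => c * ∑ i ∈ s, f i ω | m] =ᵐ[P] fun ω => c * ∑ i ∈ s, P[f i | m] ω := by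
  have hfun : (fun ω => c * ∑ i ∈ s, f i ω) = c • ∑ i ∈ s, f i := by
    ext ω
    simp [Finset.sum_apply]
  rw [hfun]
  filter_upwards [condExp_smul c (∑ i ∈ s, f i) m, condExp_finsetSum hf m] with ω h1 h2
  rw [h1, Pi.smul_apply, h2, Finset.sum_apply, smul_eq_mul]

theorem Fin.sum_univ_eq_sum_castLE_add_sum_filter {M : Type*} [AddCommMonoid M] {n N : ℕ}
    (h : n ≤ N) (f : Fin N → M) :
    ∑ i, f i = ∑ k : Fin n, f (Fin.castLE h k)
      + ∑ i ∈ Finset.univ.filter (fun i : Fin N => n ≤ (i : ℕ)), f i := by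
  rw [← Finset.sum_filter_not_add_sum_filter Finset.univ (fun i : Fin N => n ≤ (i : ℕ))]
  congr 1
  refine (Finset.sum_bij (fun k _ => Fin.castLE h k) (fun k _ => by simp)
    (fun _ _ _ _ hk => Fin.castLE_injective h hk) (fun i hi => ?_) fun _ _ => rfl).symm
  exact ⟨⟨i, by simpa using hi⟩, Finset.mem_univ _, rfl⟩

namespace NestedErrorModel

variable {Ω κ : Type*} [MeasurableSpace Ω] {P : Measure Ω} [IsProbabilityMeasure P]
  {u : Ω → ℝ} {e : κ → Ω → ℝ} {σu2 σe2 : ℝ}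
  (hum : Measurable u) (hem : ∀ j, Measurable (e j))
  (hu : P.map u = gaussianReal 0 σu2.toNNReal)
  (he : ∀ j, P.map (e j) = gaussianReal 0 σe2.toNNReal)
  (hind : iIndepFun (fun o : Option κ => o.elim u e) P) (hσu : 0 ≤ σu2) (hσe : 0 ≤ σe2)

include hum hem in
theorem measurable_response {m : κ → ℝ} {y : κ → Ω → ℝ} (hy : ∀ j ω, y j ω = m j + u ω + e j ω)
    (j : κ) : Measurable (y j) := by
  rw [show y j = fun ω => m j + u ω + e j ω from funext (hy j)]
  fun_prop

include hum hem hu he hind hσu hσe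

theorem lintegral_exp_mul_sample_eq {n : ℕ} {emb : Fin n → κ} (hemb : Function.Injective emb)
    {i : κ} (hi : i ∉ Set.range emb) (a c : ℝ) (b : Fin n → ℝ) {G : (Fin n → ℝ) → ℝ≥0∞}
    (hG : Measurable G) :
    ∫⁻ ω, ENNReal.ofReal (Real.exp (a * u ω + (c * e i ω + ∑ k, b k * e (emb k) ω)))
        * G (fun k => u ω + e (emb k) ω) ∂P
      = ENNReal.ofReal (Real.exp (a ^ 2 * σu2 / 2 + (c ^ 2 * σe2 / 2 + ∑ k, b k ^ 2 * σe2 / 2)))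
        * ∫⁻ ω, G (fun k => u ω + a * σu2 + (e (emb k) ω + b k * σe2)) ∂P := by
  -- coordinates `none ↦ u`, `some none ↦ e i`, `some (some k) ↦ e (emb k)`
  let idx : Option (Option (Fin n)) → Option κ := Option.map fun o => o.elim i emb
  have hidx : Function.Injective idx := by
    refine Option.map_injective fun o o' h => ?_
    rcases o with _ | k <;> rcases o' with _ | k'
    · rfl
    · exact absurd ⟨k', h.symm⟩ hi
    · exact absurd ⟨k, h⟩ hi
    · exact congrArg some (hemb h)
  have hZm : ∀ o, Measurable ((idx o).elim u e) := by
    rintro (_ | _ | k) <;> simp [idx, hum, hem]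
  have hlaw : ∀ o, P.map ((idx o).elim u e)
      = gaussianReal 0 (o.elim σu2.toNNReal fun _ => σe2.toNNReal) := by
    rintro (_ | _ | k) <;> simp [idx, hu, he]
  have := lintegral_exp_sum_mul_of_iIndepFun_gaussianReal (hind.precomp hidx) hZm hlaw
    (fun o => o.elim a fun o' => o'.elim c b)
    (F := fun z => G fun k => z none + z (some (some k))) (by fun_prop)
  simpa [idx, Fintype.sum_option, Real.coe_toNNReal _ hσu, Real.coe_toNNReal _ hσe] using this

theorem setLIntegral_exp_mul_sample_eq {n : ℕ} {emb : Fin n → κ}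
    (hemb : Function.Injective emb) {i : κ} (hi : i ∉ Set.range emb) {m : κ → ℝ}
    {y : κ → Ω → ℝ} (hy : ∀ j ω, y j ω = m j + u ω + e j ω) {B : Set (Fin n → ℝ)}
    (hB : MeasurableSet B) (K a c : ℝ) (b : Fin n → ℝ) (hab : ∀ k, a * σu2 + b k * σe2 = σu2) :
    ∫⁻ ω in (fun ω k => y (emb k) ω) ⁻¹' B,
        ENNReal.ofReal (Real.exp (K + (a * u ω + (c * e i ω + ∑ k, b k * e (emb k) ω)))) ∂P
      = ENNReal.ofReal
          (Real.exp (K + (a ^ 2 * σu2 / 2 + (c ^ 2 * σe2 / 2 + ∑ k, b k ^ 2 * σe2 / 2))))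
        * ∫⁻ ω, B.indicator 1 (fun k => y (emb k) ω + σu2) ∂P := by
  let G : (Fin n → ℝ) → ℝ≥0∞ := fun z => B.indicator 1 fun k => m (emb k) + z k
  have hG : Measurable G := (measurable_one.indicator hB).comp (by fun_prop)
  have hS : Measurable fun ω k => y (emb k) ω :=
    measurable_pi_lambda _ fun k => measurable_response hum hem hy (emb k)
  have hpt : ∀ ω, ((fun ω k => y (emb k) ω) ⁻¹' B).indicator (fun ω =>
        ENNReal.ofReal (Real.exp (K + (a * u ω + (c * e i ω + ∑ k, b k * e (emb k) ω))))) ω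
      = ENNReal.ofReal (Real.exp K) * (ENNReal.ofReal
          (Real.exp (a * u ω + (c * e i ω + ∑ k, b k * e (emb k) ω)))
        * G fun k => u ω + e (emb k) ω) := by
    intro ω
    have hSω : (fun k => m (emb k) + (u ω + e (emb k) ω)) = fun k => y (emb k) ω := by
      simp only [hy, add_assoc]
    by_cases hω : (fun k => y (emb k) ω) ∈ B
    · simp [G, hSω, hω, Real.exp_add, ENNReal.ofReal_mul (Real.exp_pos _).le]
    · simp [G, hSω, hω]
  have hshift : ∀ ω, G (fun k => u ω + a * σu2 + (e (emb k) ω + b k * σe2))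
      = B.indicator 1 fun k => y (emb k) ω + σu2 := by
    intro ω
    simp only [G, hy]
    congr 2 with k
    linear_combination hab k
  rw [← lintegral_indicator (hS hB), lintegral_congr hpt, lintegral_const_mul _ (by fun_prop),
    lintegral_exp_mul_sample_eq hum hem hu he hind hσu hσe hemb hi a c b hG,
    lintegral_congr hshift, ← mul_assoc, ← ENNReal.ofReal_mul (Real.exp_pos _).le,
    ← Real.exp_add]

theorem integrable_exp {m : κ → ℝ} {y : κ → Ω → ℝ}
    (hy : ∀ j ω, y j ω = m j + u ω + e j ω) (j : κ) :
    Integrable (fun ω => Real.exp (y j ω)) P := by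
  -- the tilting identity for an empty sample and `G = 1` is the exponential moment of `u + e j`
  have hfin := lintegral_exp_mul_sample_eq hum hem hu he hind hσu hσe
    (Function.injective_of_subsingleton Fin.elim0) (i := j) (by simp) 1 1 Fin.elim0
    measurable_one
  simp only [Finset.univ_eq_empty, Finset.sum_empty, add_zero, one_mul, Pi.one_apply, mul_one,
    lintegral_const, measure_univ] at hfin
  have hexp : (fun ω => Real.exp (y j ω)) = fun ω => Real.exp (m j) * Real.exp (u ω + e j ω) := by
    ext ω
    rw [hy, add_assoc, Real.exp_add]
  rw [hexp]
  refine Integrable.const_mul ⟨by fun_prop, ?_⟩ _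
  rw [hasFiniteIntegral_iff_ofReal (ae_of_all _ fun _ => (Real.exp_pos _).le), hfin]
  exact ENNReal.ofReal_lt_top

theorem condExp_exp_of_notMem_sample {n : ℕ} (hn : 0 < n) {emb : Fin n → κ}
    (hemb : Function.Injective emb) {i : κ} (hi : i ∉ Set.range emb) {γ : ℝ}
    (hγ : γ * (σu2 + σe2 / n) = σu2) {m : κ → ℝ} {y : κ → Ω → ℝ}
    (hy : ∀ j ω, y j ω = m j + u ω + e j ω) :
    P[fun ω => Real.exp (y i ω) | MeasurableSpace.comap (fun ω k => y (emb k) ω) inferInstance]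
      =ᵐ[P] fun ω => Real.exp (m i + γ * ((n : ℝ)⁻¹ * ∑ k, (y (emb k) ω - m (emb k)))
        + (σu2 * (1 - γ) + σe2) / 2) := by
  have hn' : (n : ℝ) ≠ 0 := Nat.cast_ne_zero.mpr hn.ne'
  have hS : Measurable fun ω k => y (emb k) ω :=
    measurable_pi_lambda _ fun k => measurable_response hum hem hy (emb k)
  have hexp_y : ∀ B, MeasurableSet B → ∫⁻ ω in (fun ω k => y (emb k) ω) ⁻¹' B,
      ENNReal.ofReal (Real.exp (y i ω)) ∂P
        = ENNReal.ofReal (Real.exp (m i + (σu2 / 2 + σe2 / 2)))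
          * ∫⁻ ω, B.indicator 1 (fun k => y (emb k) ω + σu2) ∂P := by
    intro B hB
    convert setLIntegral_exp_mul_sample_eq hum hem hu he hind hσu hσe hemb hi hy hB (m i) 1 1 0
      (by simp) using 5 with ω <;> simp [hy, add_assoc]
  refine condExp_comap_ae_eq_of_setLIntegral_eq (g := fun z => Real.exp (m i
    + γ * ((n : ℝ)⁻¹ * ∑ k, (z k - m (emb k))) + (σu2 * (1 - γ) + σe2) / 2)) hS
    (integrable_exp hum hem hu he hind hσu hσe hy i) (ae_of_all _ fun _ => (Real.exp_pos _).le)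
    (by fun_prop) (fun _ => (Real.exp_pos _).le) fun B hB => ?_
  have hmean : ∀ ω, m i + γ * ((n : ℝ)⁻¹ * ∑ k, (y (emb k) ω - m (emb k)))
      + (σu2 * (1 - γ) + σe2) / 2 = m i + (σu2 * (1 - γ) + σe2) / 2
        + (γ * u ω + (0 * e i ω + ∑ k, γ / n * e (emb k) ω)) := by
    intro ω
    have hres : ∀ k, y (emb k) ω - m (emb k) = u ω + e (emb k) ω := fun k => by
      rw [hy]
      ring
    simp only [hres, Finset.sum_add_distrib, Finset.sum_const, Finset.card_univ,
      Fintype.card_fin, nsmul_eq_mul, ← Finset.mul_sum]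
    field_simp
    ring
  have hab : ∀ k : Fin n, γ * σu2 + γ / n * σe2 = σu2 := fun _ => by
    linear_combination hγ
  simp only [hmean]
  rw [hexp_y B hB, setLIntegral_exp_mul_sample_eq hum hem hu he hind hσu hσe hemb hi hy hB _ γ 0
    (fun _ => γ / n) hab]
  congr 3
  have hvar : ∑ _k : Fin n, (γ / n) ^ 2 * σe2 / 2 = γ ^ 2 * (σe2 / n) / 2 := by
    simp only [Finset.sum_const, Finset.card_univ, Fintype.card_fin, nsmul_eq_mul]
    field_simp
  rw [hvar]
  linear_combination (-γ / 2) * hγ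

theorem condExp_exp_of_mem_sample {n : ℕ} (emb : Fin n → κ) {m : κ → ℝ} {y : κ → Ω → ℝ}
    (hy : ∀ j ω, y j ω = m j + u ω + e j ω) (k : Fin n) :
    P[fun ω => Real.exp (y (emb k) ω) |
        MeasurableSpace.comap (fun ω k => y (emb k) ω) inferInstance]
      = fun ω => Real.exp (y (emb k) ω) :=
  condExp_of_stronglyMeasurable
    (measurable_pi_lambda _ fun k => measurable_response hum hem hy (emb k)).comap_le
    (Real.measurable_exp.comp ((measurable_pi_apply k).comp
      (comap_measurable fun ω k => y (emb k) ω))).stronglyMeasurable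
    (integrable_exp hum hem hu he hind hσu hσe hy _)

end NestedErrorModel

/-- Theorem 1(ii): in the single-area nested-error model with log transformation, the best
predictor of the area mean `τ_d = N_d⁻¹ ∑ exp(y_{di})`, i.e. its conditional expectation
given the sample responses, equals a.s. the sum of sampled `exp(y_{di})` plus
`exp(ỹ_{di} + α_d)` over out-of-sample units, divided by `N_d`. -/
theorem best_predictor_area_mean
    {Ω : Type} [MeasurableSpace Ω] (P : Measure Ω) [IsProbabilityMeasure P]
    (p nd Nd : ℕ) (hnd : 1 ≤ nd) (hNd : nd < Nd)
    (σu2 σe2 : ℝ) (hσu : 0 ≤ σu2) (hσe : 0 < σe2)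
    (x : Fin Nd → Fin p → ℝ) (β : Fin p → ℝ)
    (u : Ω → ℝ) (e : Fin Nd → Ω → ℝ)
    (hum : Measurable u) (hem : ∀ i, Measurable (e i))
    (hu : P.map u = gaussianReal 0 σu2.toNNReal)
    (he : ∀ i, P.map (e i) = gaussianReal 0 σe2.toNNReal)
    (hind : iIndepFun
      (fun o : Option (Fin Nd) => o.elim u e) P)
    (y : Fin Nd → Ω → ℝ) (hy : ∀ i ω, y i ω = x i ⬝ᵥ β + u ω + e i ω)
    (γd αd : ℝ)
    (hγ : γd = σu2 / (σu2 + σe2 / nd))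
    (hα : αd = (1 / 2) * (σu2 * (1 - γd) + σe2)) :
    P[(fun ω => (Nd : ℝ)⁻¹ * ∑ i : Fin Nd, Real.exp (y i ω)) |
        MeasurableSpace.comap
          (fun ω => fun k : Fin nd => y (Fin.castLE hNd.le k) ω) inferInstance]
      =ᵐ[P]
    fun ω => (Nd : ℝ)⁻¹ *
      ((∑ k : Fin nd, Real.exp (y (Fin.castLE hNd.le k) ω))
        + ∑ i ∈ Finset.univ.filter (fun i : Fin Nd => nd ≤ (i : ℕ)),
            Real.exp
              ((x i ⬝ᵥ β
                  + γd * (((nd : ℝ)⁻¹ * ∑ k : Fin nd, y (Fin.castLE hNd.le k) ω)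
                      - ((nd : ℝ)⁻¹ • ∑ k : Fin nd, x (Fin.castLE hNd.le k)) ⬝ᵥ β))
                + αd)) := by
  have hγ' : γd * (σu2 + σe2 / nd) = σu2 := by
    rw [hγ]
    field_simp
  have hout : ∀ i : Fin Nd, nd ≤ (i : ℕ) →
      P[fun ω => Real.exp (y i ω) | MeasurableSpace.comap
          (fun ω k => y (Fin.castLE hNd.le k) ω) inferInstance]
        =ᵐ[P] fun ω => Real.exp ((x i ⬝ᵥ β
          + γd * (((nd : ℝ)⁻¹ * ∑ k : Fin nd, y (Fin.castLE hNd.le k) ω)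
            - ((nd : ℝ)⁻¹ • ∑ k : Fin nd, x (Fin.castLE hNd.le k)) ⬝ᵥ β)) + αd) := fun i hi =>
    (NestedErrorModel.condExp_exp_of_notMem_sample hum hem hu he hind hσu hσe.le hnd
      (Fin.castLE_injective hNd.le) (by rintro ⟨k, rfl⟩; simp at hi; omega) hγ' hy).trans
      (.of_forall fun ω => by
        simp only [smul_dotProduct, sum_dotProduct, Finset.sum_sub_distrib, mul_sub, smul_eq_mul,
          hα]
        ring_nf)
  filter_upwards [condExp_const_mul_finsetSum _ (Nd : ℝ)⁻¹ Finset.univ fun i _ =>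
      NestedErrorModel.integrable_exp hum hem hu he hind hσu hσe.le hy i,
    (Filter.eventually_all_finset _).2 fun i hi => hout i (Finset.mem_filter.1 hi).2]
    with ω hsum hout_ω
  rw [hsum, Fin.sum_univ_eq_sum_castLE_add_sum_filter hNd.le]
  congr 2
  · exact Finset.sum_congr rfl fun k _ => congrFun
      (NestedErrorModel.condExp_exp_of_mem_sample hum hem hu he hind hσu hσe.le _ hy k) ω
  · exact Finset.sum_congr rfl hout_ω
end

section
/- In the single-area nested-error model with log transformation, for any out-of-sample units i, j ∈ {n_d+1,…,N_d} it holds that E[ exp(ỹ_{di} + α_d) · exp(ỹ_{dj} + α_d) ] = exp( (x_{di}+x_{dj})'β + 2σu² + σe² − σu²(1−γ_d) ), where ỹ_{di} = x_{di}'β + γ_d(ȳ_{ds} − x̄_{ds}'β), γ_d = σu²/(σu² + σe²/n_d), α_d = (1/2)(σu²(1−γ_d) + σe²), ȳ_{ds} = n_d^{-1} Σ_{k=1}^{n_d} y_{dk}, and x̄_{ds} = n_d^{-1} Σ_{k=1}^{n_d} x_{dk}. -/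
/-!
Writing `R = ȳ_{ds} - x̄_{ds}'β = u + ē_{ds}` for the sample mean residual, the product of the two
back-transformed predictors is `exp((x_{di} + x_{dj})'β + 2α_d) · exp(2γ_d R)`. Since `u` and the
sample errors are independent centred Gaussians, `R ~ N(0, σu² + σe²/n_d)`, so its moment generating
function at `2γ_d` is `exp(2γ_d² (σu² + σe²/n_d)) = exp(2γ_d σu²)`, the last step being the defining
identity `γ_d (σu² + σe²/n_d) = σu²` of the shrinkage factor.
-/

open MeasureTheory ProbabilityTheory Matrix
open scoped NNReal

lemma mean_sub_mean_dotProduct {n p : ℕ} (hn : n ≠ 0) (x : Fin n → Fin p → ℝ) (β : Fin p → ℝ)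
    (u : ℝ) (e : Fin n → ℝ) :
    (n : ℝ)⁻¹ * ∑ k, (x k ⬝ᵥ β + u + e k) - ((n : ℝ)⁻¹ • ∑ k, x k) ⬝ᵥ β
      = u + (n : ℝ)⁻¹ * ∑ k, e k := by
  rw [smul_dotProduct, sum_dotProduct, Finset.sum_add_distrib, Finset.sum_add_distrib,
    Finset.sum_const, Finset.card_univ, Fintype.card_fin, nsmul_eq_mul, smul_eq_mul]
  field_simp
  ring

namespace ProbabilityTheory

variable {Ω ι κ : Type*} [MeasurableSpace Ω] {P : Measure Ω} {u : Ω → ℝ} {e : ι → Ω → ℝ}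

lemma iIndepFun.option_elim_comp (h : iIndepFun (fun o : Option ι => o.elim u e) P)
    {f : κ → ι} (hf : f.Injective) :
    iIndepFun (fun o : Option κ => o.elim u fun k => e (f k)) P := by
  convert h.precomp (Option.map_injective hf) using 2 with o
  cases o <;> rfl

lemma mgf_add_mul_sum_of_gaussianReal [Fintype ι]
    (h : iIndepFun (fun o : Option ι => o.elim u e) P) {a b : ℝ≥0}
    (hu : P.map u = gaussianReal 0 a) (he : ∀ k, P.map (e k) = gaussianReal 0 b) (c t : ℝ) :
    mgf (fun ω => u ω + c * ∑ k, e k ω) P t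
      = Real.exp ((a + c ^ 2 * Fintype.card ι * b) * t ^ 2 / 2) := by
  set X : Option ι → Ω → ℝ := fun o => o.elim u fun k ω => c * e k ω
  have hX : iIndepFun X P := by
    have hscale : ∀ o : Option ι, Measurable (o.elim id fun _ => (c * ·)) := by
      rintro (_ | k)
      exacts [measurable_id, measurable_const_mul c]
    convert h.comp _ hscale using 2 with o
    cases o <;> rfl
  have hXm : ∀ o, AEMeasurable (X o) P := by
    rintro (_ | k)
    · exact aemeasurable_of_map_neZero (μ := P) (f := u) (by rw [hu]; infer_instance)
    · exact (aemeasurable_of_map_neZero (f := e k) (by rw [he k]; infer_instance)).const_mul c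
  have hsum : (fun ω => u ω + c * ∑ k, e k ω) = ∑ o, X o := by
    ext ω
    simp [X, Fintype.sum_option, Finset.mul_sum]
  rw [hsum, hX.mgf_sum₀ hXm, Fintype.prod_option]
  simp only [X, Option.elim, mgf_const_mul, mgf_gaussianReal hu, mgf_gaussianReal (he _),
    Finset.prod_const, Finset.card_univ, ← Real.exp_nat_mul, ← Real.exp_add]
  congr 1
  ring

end ProbabilityTheory

theorem expectation_bp_times_bp_general
    {Ω : Type} [MeasurableSpace Ω] (P : Measure Ω)
    (p nd Nd : ℕ) (hnd : 1 ≤ nd) (hNd : nd < Nd)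
    (σu2 σe2 : ℝ) (hσu : 0 ≤ σu2) (hσe : 0 < σe2)
    (x : Fin Nd → Fin p → ℝ) (β : Fin p → ℝ)
    (u : Ω → ℝ) (e : Fin Nd → Ω → ℝ)
    (hu : P.map u = gaussianReal 0 σu2.toNNReal)
    (he : ∀ i, P.map (e i) = gaussianReal 0 σe2.toNNReal)
    (hind : iIndepFun
      (fun o : Option (Fin Nd) => o.elim u e) P)
    (y : Fin Nd → Ω → ℝ) (hy : ∀ i ω, y i ω = x i ⬝ᵥ β + u ω + e i ω)
    (γd αd : ℝ)
    (hγ : γd = σu2 / (σu2 + σe2 / nd))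
    (hα : αd = (1 / 2) * (σu2 * (1 - γd) + σe2))
    (i j : Fin Nd) :
    ∫ ω, Real.exp
          ((x i ⬝ᵥ β
              + γd * (((nd : ℝ)⁻¹ * ∑ k : Fin nd, y (Fin.castLE hNd.le k) ω)
                  - ((nd : ℝ)⁻¹ • ∑ k : Fin nd, x (Fin.castLE hNd.le k)) ⬝ᵥ β))
            + αd)
        * Real.exp
          ((x j ⬝ᵥ β
              + γd * (((nd : ℝ)⁻¹ * ∑ k : Fin nd, y (Fin.castLE hNd.le k) ω)
                  - ((nd : ℝ)⁻¹ • ∑ k : Fin nd, x (Fin.castLE hNd.le k)) ⬝ᵥ β))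
            + αd) ∂P
      = Real.exp ((x i + x j) ⬝ᵥ β + 2 * σu2 + σe2 - σu2 * (1 - γd)) := by
  set Z : Ω → ℝ := fun ω => u ω + (nd : ℝ)⁻¹ * ∑ k : Fin nd, e (Fin.castLE hNd.le k) ω
  have hresidual : ∀ ω, (nd : ℝ)⁻¹ * ∑ k : Fin nd, y (Fin.castLE hNd.le k) ω
      - ((nd : ℝ)⁻¹ • ∑ k : Fin nd, x (Fin.castLE hNd.le k)) ⬝ᵥ β = Z ω := fun ω => by
    simp only [hy]
    exact mean_sub_mean_dotProduct (by omega) _ _ _ _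
  have hmgf : mgf Z P (2 * γd) = Real.exp ((σu2 + σe2 / nd) * (2 * γd) ^ 2 / 2) := by
    rw [mgf_add_mul_sum_of_gaussianReal (hind.option_elim_comp (Fin.castLE_injective hNd.le)) hu
      (fun _ => he _), Fintype.card_fin, Real.coe_toNNReal _ hσu, Real.coe_toNNReal _ hσe.le]
    field_simp
  have hγσ : γd * (σu2 + σe2 / nd) = σu2 := by
    rw [hγ]
    exact div_mul_cancel₀ _ (by positivity)
  simp only [hresidual]
  calc _ = ∫ ω, Real.exp ((x i + x j) ⬝ᵥ β + 2 * αd) * Real.exp (2 * γd * Z ω) ∂P := by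
        simp only [← Real.exp_add, add_dotProduct]
        congr with ω
        congr 1
        ring
    _ = Real.exp ((x i + x j) ⬝ᵥ β + 2 * αd) * mgf Z P (2 * γd) := integral_const_mul _ _
    _ = _ := by
        rw [hmgf, ← Real.exp_add, hα]
        congr 1
        linear_combination (2 * γd) * hγσ

/-- In the single-area nested-error model with log transformation, for out-of-sample units
`i, j`, `E[exp(ỹ_{di}+α_d) · exp(ỹ_{dj}+α_d)]
  = exp((x_{di}+x_{dj})'β + 2σu² + σe² − σu²(1−γ_d))`. -/
theorem expectation_bp_times_bp
    {Ω : Type} [MeasurableSpace Ω] (P : Measure Ω) [IsProbabilityMeasure P]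
    (p nd Nd : ℕ) (hnd : 1 ≤ nd) (hNd : nd < Nd)
    (σu2 σe2 : ℝ) (hσu : 0 ≤ σu2) (hσe : 0 < σe2)
    (x : Fin Nd → Fin p → ℝ) (β : Fin p → ℝ)
    (u : Ω → ℝ) (e : Fin Nd → Ω → ℝ)
    (hum : Measurable u) (hem : ∀ i, Measurable (e i))
    (hu : P.map u = gaussianReal 0 σu2.toNNReal)
    (he : ∀ i, P.map (e i) = gaussianReal 0 σe2.toNNReal)
    (hind : iIndepFun
      (fun o : Option (Fin Nd) => o.elim u e) P)
    (y : Fin Nd → Ω → ℝ) (hy : ∀ i ω, y i ω = x i ⬝ᵥ β + u ω + e i ω)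
    (γd αd : ℝ)
    (hγ : γd = σu2 / (σu2 + σe2 / nd))
    (hα : αd = (1 / 2) * (σu2 * (1 - γd) + σe2))
    (i j : Fin Nd) (hi : nd ≤ (i : ℕ)) (hj : nd ≤ (j : ℕ)) :
    ∫ ω, Real.exp
          ((x i ⬝ᵥ β
              + γd * (((nd : ℝ)⁻¹ * ∑ k : Fin nd, y (Fin.castLE hNd.le k) ω)
                  - ((nd : ℝ)⁻¹ • ∑ k : Fin nd, x (Fin.castLE hNd.le k)) ⬝ᵥ β))
            + αd)
        * Real.exp
          ((x j ⬝ᵥ β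
              + γd * (((nd : ℝ)⁻¹ * ∑ k : Fin nd, y (Fin.castLE hNd.le k) ω)
                  - ((nd : ℝ)⁻¹ • ∑ k : Fin nd, x (Fin.castLE hNd.le k)) ⬝ᵥ β))
            + αd) ∂P
      = Real.exp ((x i + x j) ⬝ᵥ β + 2 * σu2 + σe2 - σu2 * (1 - γd)) :=
  expectation_bp_times_bp_general P p nd Nd hnd hNd σu2 σe2 hσu hσe x β u e hu he hind y hy γd αd hγ
    hα i j
end

section
/- In the multi-area nested-error matrix model, for an area d and any x_{di}, x_{dj} ∈ ℝ^p, the vectors b_{di} = V_s^{-1}X_sQ_sx_{di} + σu² P_s Z_s m_d and b_{dj} = V_s^{-1}X_sQ_sx_{dj} + σu² P_s Z_s m_d satisfy (b_{di}+b_{dj})' V_s (b_{di}+b_{dj}) = (x_{di}+x_{dj})' Q_s (x_{di}+x_{dj}) + 4γ_d( σu² − γ_d x̄_{ds}' Q_s x̄_{ds} ), where γ_d = σu²/(σu² + σe²/n_d) and x̄_{ds} is the average of the covariate vectors of the sampled units of area d. -/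
/-!
Write `Q = (XᵀV⁻¹X)⁻¹`, `A = V⁻¹XQ` and `P = V⁻¹ - V⁻¹XQXᵀV⁻¹`. Since `PX = 0` and `XᵀP = 0`,
one gets `AᵀVA = Q`, `AᵀVP = 0` and `PVP = P`, so for `b = Ax + Pz` the `V`-quadratic form
splits as `xᵀQx + zᵀPz`. Here `b_{di} + b_{dj} = A(x_{di} + x_{dj}) + P(2σu² w)` with `w` the
indicator of area `d`, an eigenvector of `V` for `c = σu² n_d + σe²` with `Xᵀw = n_d x̄`.
Hence `wᵀPw = n_d/c - (n_d/c)² x̄ᵀQx̄`, and `γ_d = σu² n_d / c` turns `4σu⁴ wᵀPw` into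
`4γ_d(σu² - γ_d x̄ᵀQx̄)`.
-/

open Matrix

theorem mulVec_dotProduct_mulVec_mulVec {m n k : Type*} [Fintype m] [Fintype n] [Fintype k]
    (B : Matrix m n ℝ) (M : Matrix m m ℝ) (C : Matrix m k ℝ) (x : n → ℝ) (y : k → ℝ) :
    (B *ᵥ x) ⬝ᵥ M *ᵥ (C *ᵥ y) = x ⬝ᵥ (Bᵀ * M * C) *ᵥ y := by
  rw [← vecMul_transpose, ← dotProduct_mulVec, mulVec_mulVec, mulVec_mulVec, Matrix.mul_assoc]

section GLS

variable {m p : Type*} [Fintype m] [Fintype p] [DecidableEq m] [DecidableEq p]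

noncomputable def glsCovariance (V : Matrix m m ℝ) (X : Matrix m p ℝ) : Matrix p p ℝ :=
  (Xᵀ * V⁻¹ * X)⁻¹

noncomputable def remlProjection (V : Matrix m m ℝ) (X : Matrix m p ℝ) : Matrix m m ℝ :=
  V⁻¹ - V⁻¹ * X * glsCovariance V X * Xᵀ * V⁻¹

variable {V : Matrix m m ℝ} {X : Matrix m p ℝ}

theorem isSymm_glsCovariance (hV : V.IsSymm) : (glsCovariance V X).IsSymm := by
  refine IsSymm.inv ?_
  simp [IsSymm, transpose_mul, hV.inv.eq, Matrix.mul_assoc]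

theorem isSymm_remlProjection (hV : V.IsSymm) : (remlProjection V X).IsSymm := by
  refine hV.inv.sub ?_
  simp [IsSymm, transpose_mul, hV.inv.eq, (isSymm_glsCovariance (X := X) hV).eq, Matrix.mul_assoc]

theorem glsCovariance_mul_cancel (hM : IsUnit (Xᵀ * V⁻¹ * X)) :
    glsCovariance V X * (Xᵀ * V⁻¹ * X) = 1 :=
  nonsing_inv_mul _ ((isUnit_iff_isUnit_det _).mp hM)

theorem mul_glsCovariance_cancel (hM : IsUnit (Xᵀ * V⁻¹ * X)) :
    Xᵀ * V⁻¹ * X * glsCovariance V X = 1 :=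
  mul_nonsing_inv _ ((isUnit_iff_isUnit_det _).mp hM)

theorem transpose_gls_mul_mul_gls (hV : V.IsSymm) (hVdet : IsUnit V.det)
    (hM : IsUnit (Xᵀ * V⁻¹ * X)) :
    (V⁻¹ * X * glsCovariance V X)ᵀ * V * (V⁻¹ * X * glsCovariance V X) = glsCovariance V X := by
  have hQ := isSymm_glsCovariance (X := X) hV
  simp only [transpose_mul, hV.inv.eq, hQ.eq]
  calc _ = glsCovariance V X * (Xᵀ * (V⁻¹ * V) * V⁻¹ * X) * glsCovariance V X := by
          simp only [Matrix.mul_assoc]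
    _ = glsCovariance V X * (Xᵀ * V⁻¹ * X) * glsCovariance V X := by
      rw [nonsing_inv_mul _ hVdet, Matrix.mul_one]
    _ = _ := by rw [glsCovariance_mul_cancel hM, Matrix.one_mul]

theorem remlProjection_mul_eq_zero (hM : IsUnit (Xᵀ * V⁻¹ * X)) :
    remlProjection V X * X = 0 := by
  calc _ = V⁻¹ * X - V⁻¹ * X * (glsCovariance V X * (Xᵀ * V⁻¹ * X)) := by
        simp only [remlProjection, Matrix.sub_mul, Matrix.mul_assoc]
    _ = 0 := by rw [glsCovariance_mul_cancel hM, Matrix.mul_one, sub_self]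

theorem transpose_mul_remlProjection_eq_zero (hM : IsUnit (Xᵀ * V⁻¹ * X)) :
    Xᵀ * remlProjection V X = 0 := by
  calc _ = Xᵀ * V⁻¹ - Xᵀ * V⁻¹ * X * glsCovariance V X * Xᵀ * V⁻¹ := by
        simp only [remlProjection, Matrix.mul_sub, Matrix.mul_assoc]
    _ = 0 := by rw [mul_glsCovariance_cancel hM, Matrix.one_mul, sub_self]

theorem remlProjection_mul_mul_gls (hVdet : IsUnit V.det) (hM : IsUnit (Xᵀ * V⁻¹ * X)) :
    remlProjection V X * V * (V⁻¹ * X * glsCovariance V X) = 0 := by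
  simp only [Matrix.mul_assoc, mul_nonsing_inv_cancel_left _ _ hVdet]
  rw [← Matrix.mul_assoc, remlProjection_mul_eq_zero hM, Matrix.zero_mul]

theorem remlProjection_mul_mul_self (hVdet : IsUnit V.det) (hM : IsUnit (Xᵀ * V⁻¹ * X)) :
    remlProjection V X * V * remlProjection V X = remlProjection V X := by
  have hPV : remlProjection V X * V = 1 - V⁻¹ * X * glsCovariance V X * Xᵀ := by
    simp only [remlProjection, Matrix.sub_mul, Matrix.mul_assoc, nonsing_inv_mul _ hVdet,
      Matrix.mul_one]
  rw [hPV, Matrix.sub_mul, Matrix.one_mul, Matrix.mul_assoc,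
    transpose_mul_remlProjection_eq_zero hM, Matrix.mul_zero, sub_zero]

theorem quadForm_gls_add_remlProjection (hV : V.IsSymm) (hVdet : IsUnit V.det)
    (hM : IsUnit (Xᵀ * V⁻¹ * X)) (x : p → ℝ) (z : m → ℝ) :
    let b := (V⁻¹ * X * glsCovariance V X) *ᵥ x + remlProjection V X *ᵥ z
    b ⬝ᵥ V *ᵥ b = x ⬝ᵥ glsCovariance V X *ᵥ x + z ⬝ᵥ remlProjection V X *ᵥ z := by
  have hcross : (V⁻¹ * X * glsCovariance V X)ᵀ * V * remlProjection V X = 0 := by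
    simp only [transpose_mul, hV.inv.eq, (isSymm_glsCovariance (X := X) hV).eq, Matrix.mul_assoc,
      nonsing_inv_mul_cancel_left _ _ hVdet, transpose_mul_remlProjection_eq_zero hM,
      Matrix.mul_zero]
  simp only [add_dotProduct, dotProduct_add, mulVec_add, mulVec_dotProduct_mulVec_mulVec,
    transpose_gls_mul_mul_gls hV hVdet hM, hcross, (isSymm_remlProjection hV).eq,
    remlProjection_mul_mul_gls hVdet hM, remlProjection_mul_mul_self hVdet hM, zero_mulVec,
    dotProduct_zero, add_zero, zero_add]

theorem dotProduct_remlProjection_mulVec (hV : V.IsSymm) (z : m → ℝ) :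
    z ⬝ᵥ remlProjection V X *ᵥ z
      = z ⬝ᵥ V⁻¹ *ᵥ z - (Xᵀ *ᵥ (V⁻¹ *ᵥ z)) ⬝ᵥ glsCovariance V X *ᵥ (Xᵀ *ᵥ (V⁻¹ *ᵥ z)) := by
  rw [mulVec_mulVec, mulVec_dotProduct_mulVec_mulVec, remlProjection, sub_mulVec, dotProduct_sub]
  simp only [transpose_mul, hV.inv.eq, transpose_transpose, Matrix.mul_assoc]

end GLS

theorem posDef_smul_mul_transpose_add_smul_one {m k : Type*} [Fintype m] [Fintype k]
    [DecidableEq m] (Z : Matrix m k ℝ) {a b : ℝ} (ha : 0 ≤ a) (hb : 0 < b) :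
    (a • (Z * Zᵀ) + b • (1 : Matrix m m ℝ)).PosDef :=
  PosDef.posSemidef_add (by simpa using (posSemidef_self_mul_conjTranspose Z).smul ha)
    (PosDef.one.smul hb)

theorem inv_mulVec_eq_of_mulVec_eq_smul {m : Type*} [Fintype m] [DecidableEq m]
    {V : Matrix m m ℝ} (hV : IsUnit V.det) {w : m → ℝ} {c : ℝ} (hw : V *ᵥ w = c • w) :
    V⁻¹ *ᵥ w = c⁻¹ • w := by
  have hw' : w = c • V⁻¹ *ᵥ w := by
    rw [← mulVec_smul, ← hw, mulVec_mulVec, nonsing_inv_mul _ hV, one_mulVec]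
  rcases eq_or_ne c 0 with rfl | hc
  · rw [zero_smul] at hw'
    rw [hw', mulVec_zero, smul_zero]
  · calc V⁻¹ *ᵥ w = c⁻¹ • c • V⁻¹ *ᵥ w := by rw [smul_smul, inv_mul_cancel₀ hc, one_smul]
      _ = c⁻¹ • w := by rw [← hw']

section NestedError

variable {D : ℕ} {nds : Fin D → ℕ}

def areaIndicator (d : Fin D) : (Σ d, Fin (nds d)) → ℝ := fun k => if k.1 = d then 1 else 0

theorem dotProduct_areaIndicator (x : (Σ d, Fin (nds d)) → ℝ) (d : Fin D) :
    x ⬝ᵥ areaIndicator d = ∑ k, x ⟨d, k⟩ := by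
  rw [dotProduct, ← Finset.univ_sigma_univ, Finset.sum_sigma, Fintype.sum_eq_single d]
  · simp [areaIndicator]
  · intro a ha
    simp [areaIndicator, ha]

theorem areaIndicator_dotProduct_self (d : Fin D) :
    areaIndicator (nds := nds) d ⬝ᵥ areaIndicator d = nds d := by
  simp [dotProduct_areaIndicator, areaIndicator]

theorem transpose_mulVec_areaIndicator {ι : Type*} (A : Matrix (Σ d, Fin (nds d)) ι ℝ)
    (d : Fin D) :
    Aᵀ *ᵥ areaIndicator d = ∑ k, A ⟨d, k⟩ := by
  ext i
  simp [mulVec, dotProduct_areaIndicator]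

variable {Z : Matrix (Σ d, Fin (nds d)) (Fin D) ℝ}
  (hZ : ∀ k d', Z k d' = if k.1 = d' then 1 else 0)
include hZ

theorem mulVec_single_one_eq_areaIndicator (d : Fin D) :
    Z *ᵥ Pi.single d 1 = areaIndicator d := by
  ext k
  simp [mulVec_single, hZ, areaIndicator]

theorem mul_transpose_mulVec_areaIndicator (d : Fin D) :
    (Z * Zᵀ) *ᵥ areaIndicator d = (nds d : ℝ) • areaIndicator d := by
  have hrow : ∀ k, Z ⟨d, k⟩ = Pi.single d 1 := fun k => by
    ext d'; simp [hZ, Pi.single_apply, eq_comm]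
  rw [← mulVec_mulVec, transpose_mulVec_areaIndicator, Finset.sum_congr rfl fun k _ => hrow k,
    Finset.sum_const, Finset.card_univ, Fintype.card_fin, ← Nat.cast_smul_eq_nsmul ℝ, mulVec_smul,
    mulVec_single_one_eq_areaIndicator hZ]

theorem nestedErrorCov_mulVec_areaIndicator (a b : ℝ) (d : Fin D) :
    (a • (Z * Zᵀ) + b • 1) *ᵥ areaIndicator d = (a * nds d + b) • areaIndicator d := by
  rw [add_mulVec, smul_mulVec, smul_mulVec, mul_transpose_mulVec_areaIndicator hZ, one_mulVec,
    smul_smul, add_smul]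

end NestedError

theorem quadratic_form_b_plus_b_general
    (D p : ℕ) (nds : Fin D → ℕ) (hnds : ∀ d, 1 ≤ nds d)
    (σu2 σe2 : ℝ) (hσu : 0 ≤ σu2) (hσe : 0 < σe2)
    (Xs : Matrix ((d : Fin D) × Fin (nds d)) (Fin p) ℝ)
    (Zs : Matrix ((d : Fin D) × Fin (nds d)) (Fin D) ℝ)
    (hZs : ∀ k d', Zs k d' = if k.1 = d' then 1 else 0)
    (Vs : Matrix ((d : Fin D) × Fin (nds d)) ((d : Fin D) × Fin (nds d)) ℝ)
    (hVs : Vs = σu2 • (Zs * Zsᵀ) + σe2 • (1 : Matrix _ _ ℝ))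
    (hXVX : IsUnit (Xsᵀ * Vs⁻¹ * Xs))
    (Qs : Matrix (Fin p) (Fin p) ℝ) (hQs : Qs = (Xsᵀ * Vs⁻¹ * Xs)⁻¹)
    (Ps : Matrix ((d : Fin D) × Fin (nds d)) ((d : Fin D) × Fin (nds d)) ℝ)
    (hPs : Ps = Vs⁻¹ - Vs⁻¹ * Xs * Qs * Xsᵀ * Vs⁻¹)
    (d : Fin D) (xdi xdj : Fin p → ℝ)
    (γd : ℝ) (hγ : γd = σu2 / (σu2 + σe2 / (nds d : ℝ)))
    (xbar : Fin p → ℝ)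
    (hxbar : xbar = ((nds d : ℝ))⁻¹ • ∑ k : Fin (nds d), Xs ⟨d, k⟩)
    (bdi bdj : (d : Fin D) × Fin (nds d) → ℝ)
    (hbdi : bdi = (Vs⁻¹ * Xs * Qs).mulVec xdi
        + σu2 • Ps.mulVec (Zs.mulVec (Pi.single d 1)))
    (hbdj : bdj = (Vs⁻¹ * Xs * Qs).mulVec xdj
        + σu2 • Ps.mulVec (Zs.mulVec (Pi.single d 1))) :
    (bdi + bdj) ⬝ᵥ Vs.mulVec (bdi + bdj)
      = (xdi + xdj) ⬝ᵥ Qs.mulVec (xdi + xdj)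
          + 4 * γd * (σu2 - γd * (xbar ⬝ᵥ Qs.mulVec xbar)) := by
  have hQ : Qs = glsCovariance Vs Xs := hQs
  have hP : Ps = remlProjection Vs Xs := by rw [hPs, hQ, remlProjection]
  subst hQ hP
  have hn : (nds d : ℝ) ≠ 0 := Nat.cast_ne_zero.mpr (Nat.one_le_iff_ne_zero.mp (hnds d))
  have hVpd : Vs.PosDef := hVs ▸ posDef_smul_mul_transpose_add_smul_one Zs hσu hσe
  have hVsymm : Vs.IsSymm := isHermitian_iff_isSymm.mp hVpd.isHermitian
  have hVdet : IsUnit Vs.det := (isUnit_iff_isUnit_det _).mp hVpd.isUnit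
  have hVinv : Vs⁻¹ *ᵥ areaIndicator d = (σu2 * nds d + σe2)⁻¹ • areaIndicator d :=
    inv_mulVec_eq_of_mulVec_eq_smul hVdet (hVs ▸ nestedErrorCov_mulVec_areaIndicator hZs _ _ d)
  have hXw : Xsᵀ *ᵥ areaIndicator d = (nds d : ℝ) • xbar := by
    rw [transpose_mulVec_areaIndicator, hxbar, smul_smul, mul_inv_cancel₀ hn, one_smul]
  have hb : bdi + bdj = (Vs⁻¹ * Xs * glsCovariance Vs Xs) *ᵥ (xdi + xdj)
      + remlProjection Vs Xs *ᵥ ((2 * σu2) • areaIndicator d) := by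
    rw [hbdi, hbdj, mulVec_single_one_eq_areaIndicator hZs, mulVec_add, mulVec_smul]
    module
  rw [hb, quadForm_gls_add_remlProjection hVsymm hVdet hXVX,
    dotProduct_remlProjection_mulVec hVsymm, mulVec_smul, hVinv, mulVec_smul, mulVec_smul, hXw]
  simp only [dotProduct_smul, smul_dotProduct, mulVec_smul, areaIndicator_dotProduct_self,
    smul_eq_mul, hγ]
  field_simp
  ring

/-- In the multi-area nested-error matrix model,
`(b_{di}+b_{dj})' V_s (b_{di}+b_{dj})
  = (x_{di}+x_{dj})' Q_s (x_{di}+x_{dj}) + 4γ_d(σu² − γ_d x̄_{ds}' Q_s x̄_{ds})`. -/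
theorem quadratic_form_b_plus_b
    (D p : ℕ) (hD : 0 < D) (nds : Fin D → ℕ) (hnds : ∀ d, 1 ≤ nds d)
    (σu2 σe2 : ℝ) (hσu : 0 ≤ σu2) (hσe : 0 < σe2)
    (Xs : Matrix ((d : Fin D) × Fin (nds d)) (Fin p) ℝ)
    (Zs : Matrix ((d : Fin D) × Fin (nds d)) (Fin D) ℝ)
    (hZs : ∀ k d', Zs k d' = if k.1 = d' then 1 else 0)
    (Vs : Matrix ((d : Fin D) × Fin (nds d)) ((d : Fin D) × Fin (nds d)) ℝ)
    (hVs : Vs = σu2 • (Zs * Zsᵀ) + σe2 • (1 : Matrix _ _ ℝ))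
    (hXVX : IsUnit (Xsᵀ * Vs⁻¹ * Xs))
    (Qs : Matrix (Fin p) (Fin p) ℝ) (hQs : Qs = (Xsᵀ * Vs⁻¹ * Xs)⁻¹)
    (Ps : Matrix ((d : Fin D) × Fin (nds d)) ((d : Fin D) × Fin (nds d)) ℝ)
    (hPs : Ps = Vs⁻¹ - Vs⁻¹ * Xs * Qs * Xsᵀ * Vs⁻¹)
    (d : Fin D) (xdi xdj : Fin p → ℝ)
    (γd : ℝ) (hγ : γd = σu2 / (σu2 + σe2 / (nds d : ℝ)))
    (xbar : Fin p → ℝ)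
    (hxbar : xbar = ((nds d : ℝ))⁻¹ • ∑ k : Fin (nds d), Xs ⟨d, k⟩)
    (bdi bdj : (d : Fin D) × Fin (nds d) → ℝ)
    (hbdi : bdi = (Vs⁻¹ * Xs * Qs).mulVec xdi
        + σu2 • Ps.mulVec (Zs.mulVec (Pi.single d 1)))
    (hbdj : bdj = (Vs⁻¹ * Xs * Qs).mulVec xdj
        + σu2 • Ps.mulVec (Zs.mulVec (Pi.single d 1))) :
    (bdi + bdj) ⬝ᵥ Vs.mulVec (bdi + bdj)
      = (xdi + xdj) ⬝ᵥ Qs.mulVec (xdi + xdj)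
          + 4 * γd * (σu2 - γd * (xbar ⬝ᵥ Qs.mulVec xbar)) :=
  quadratic_form_b_plus_b_general D p nds hnds σu2 σe2 hσu hσe Xs Zs hZs Vs hVs hXVX Qs hQs Ps hPs d
    xdi xdj γd hγ xbar hxbar bdi bdj hbdi hbdj
end

section
/- In the multi-area nested-error matrix model, for an area d, a sampled unit i of area d with standard basis vector a_{di} ∈ ℝ^n (the indicator of the position of unit i in the stacked sample vector) and covariate x_{di} (the corresponding row of X_s), and any x_{dj} ∈ ℝ^p with b_{dj} = V_s^{-1}X_sQ_sx_{dj} + σu² P_s Z_s m_d, it holds that (a_{di}+b_{dj})' V_s (a_{di}+b_{dj}) = σe² + σu²(3 + γ_d) + 2(x_{dj} − γ_d x̄_{ds})' Q_s x_{di} + x_{dj}' Q_s x_{dj} − γ_d² x̄_{ds}' Q_s x̄_{ds}, where γ_d = σu²/(σu² + σe²/n_d) and x̄_{ds} is the average of the covariate vectors of the sampled units of area d. -/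
open Matrix

/-!
With `u = Z_s m_d`, the covariance satisfies `V_s a = σu² u + σe² a` and `V_s u = λ u` for
`λ = σu² n_d + σe²`, so `V_s⁻¹ u = λ⁻¹ u` and `X_s' V_s⁻¹ u = (n_d / λ) x̄`. Since `X_s' P_s = 0`
and `V_s P_s = I - X_s Q_s X_s' V_s⁻¹`, this gives `X_s' b = x_dj` and
`V_s b = X_s Q_s (x_dj - γ_d x̄) + σu² u` with `γ_d = σu² n_d / λ`. Expanding the quadratic form
then only uses `a'a = a'u = 1`, `u'u = n_d` and the symmetry of `Q_s`.
-/

section Symmetric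

variable {ι : Type*} [Fintype ι] {R : Type*} [CommRing R]

theorem Matrix.IsSymm.dotProduct_mulVec_comm {M : Matrix ι ι R} (hM : M.IsSymm) (v w : ι → R) :
    v ⬝ᵥ M *ᵥ w = w ⬝ᵥ M *ᵥ v := by
  rw [← dotProduct_transpose_mulVec, hM.eq]

theorem Matrix.IsSymm.add_dotProduct_mulVec_add {M : Matrix ι ι R} (hM : M.IsSymm)
    (v w : ι → R) :
    (v + w) ⬝ᵥ M *ᵥ (v + w) = v ⬝ᵥ M *ᵥ v + 2 * (v ⬝ᵥ M *ᵥ w) + w ⬝ᵥ M *ᵥ w := by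
  rw [mulVec_add, dotProduct_add, add_dotProduct, add_dotProduct, hM.dotProduct_mulVec_comm w v]
  ring

theorem dotProduct_mulVec_eq_transpose_mulVec_dotProduct {κ : Type*} [Fintype κ]
    (A : Matrix ι κ R) (v : ι → R) (w : κ → R) : v ⬝ᵥ A *ᵥ w = (Aᵀ *ᵥ v) ⬝ᵥ w := by
  rw [dotProduct_mulVec, mulVec_transpose]

theorem isSymm_transpose_mul_mul {κ : Type*} {M : Matrix ι ι R} (X : Matrix ι κ R)
    (hM : M.IsSymm) : (Xᵀ * M * X).IsSymm := by
  simp only [IsSymm, transpose_mul, transpose_transpose, hM.eq, Matrix.mul_assoc]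

end Symmetric

theorem inv_mulVec_eq_inv_smul {ι K : Type*} [Fintype ι] [DecidableEq ι] [Field K]
    {V : Matrix ι ι K} (hV : IsUnit V) {u : ι → K} {lam : K} (hlam : lam ≠ 0)
    (hVu : V *ᵥ u = lam • u) : V⁻¹ *ᵥ u = lam⁻¹ • u := by
  calc V⁻¹ *ᵥ u = lam⁻¹ • V⁻¹ *ᵥ (lam • u) := by rw [mulVec_smul, inv_smul_smul₀ hlam]
    _ = lam⁻¹ • u := by
      rw [← hVu, mulVec_mulVec, nonsing_inv_mul _ ((isUnit_iff_isUnit_det V).mp hV), one_mulVec]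

section GLS

variable {ι κ : Type*} [Fintype ι] [DecidableEq ι] [Fintype κ]
  {V : Matrix ι ι ℝ} {X : Matrix ι κ ℝ} {Q : Matrix κ κ ℝ}

variable (V X Q) in
noncomputable def glsAnnihilator : Matrix ι ι ℝ := V⁻¹ - V⁻¹ * X * Q * Xᵀ * V⁻¹

theorem transpose_mul_glsAnnihilator [DecidableEq κ] (hQ : Xᵀ * V⁻¹ * X * Q = 1) :
    Xᵀ * glsAnnihilator V X Q = 0 := by
  rw [glsAnnihilator, Matrix.mul_sub,
    show Xᵀ * (V⁻¹ * X * Q * Xᵀ * V⁻¹) = Xᵀ * V⁻¹ * X * Q * (Xᵀ * V⁻¹) by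
      simp only [Matrix.mul_assoc],
    hQ, Matrix.one_mul, sub_self]

theorem mul_glsAnnihilator (hV : V * V⁻¹ = 1) :
    V * glsAnnihilator V X Q = 1 - X * Q * Xᵀ * V⁻¹ := by
  simp only [glsAnnihilator, mul_sub, hV, ← Matrix.mul_assoc, Matrix.one_mul]

theorem transpose_mulVec_add_glsAnnihilator_mulVec [DecidableEq κ] (hQ : Xᵀ * V⁻¹ * X * Q = 1)
    (x : κ → ℝ) (s : ℝ) (u : ι → ℝ) :
    Xᵀ *ᵥ ((V⁻¹ * X * Q) *ᵥ x + s • glsAnnihilator V X Q *ᵥ u) = x := by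
  rw [mulVec_add, mulVec_smul, mulVec_mulVec, mulVec_mulVec, transpose_mul_glsAnnihilator hQ,
    ← Matrix.mul_assoc, ← Matrix.mul_assoc, hQ]
  simp

theorem mulVec_add_glsAnnihilator_mulVec (hV : V * V⁻¹ = 1) (x : κ → ℝ) (s : ℝ) (u : ι → ℝ) :
    V *ᵥ ((V⁻¹ * X * Q) *ᵥ x + s • glsAnnihilator V X Q *ᵥ u)
      = X *ᵥ Q *ᵥ (x - s • Xᵀ *ᵥ V⁻¹ *ᵥ u) + s • u := by
  rw [mulVec_add, mulVec_smul, mulVec_mulVec, mulVec_mulVec, mul_glsAnnihilator hV,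
    ← Matrix.mul_assoc, ← Matrix.mul_assoc, hV, Matrix.one_mul]
  simp only [sub_mulVec, one_mulVec, mulVec_sub, mulVec_smul, mulVec_mulVec, Matrix.mul_assoc]
  module

theorem dotProduct_add_glsAnnihilator_mulVec (hV : V⁻¹.IsSymm) (x : κ → ℝ) (s : ℝ)
    (u : ι → ℝ) :
    u ⬝ᵥ ((V⁻¹ * X * Q) *ᵥ x + s • glsAnnihilator V X Q *ᵥ u)
      = (Xᵀ *ᵥ V⁻¹ *ᵥ u) ⬝ᵥ Q *ᵥ x
        + s * (u ⬝ᵥ V⁻¹ *ᵥ u - (Xᵀ *ᵥ V⁻¹ *ᵥ u) ⬝ᵥ Q *ᵥ (Xᵀ *ᵥ V⁻¹ *ᵥ u)) := by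
  have hcross : ∀ y, u ⬝ᵥ (V⁻¹ * X * Q) *ᵥ y = (Xᵀ *ᵥ V⁻¹ *ᵥ u) ⬝ᵥ Q *ᵥ y := fun y => by
    rw [← mulVec_mulVec, ← mulVec_mulVec, dotProduct_mulVec_eq_transpose_mulVec_dotProduct,
      hV.eq, dotProduct_mulVec_eq_transpose_mulVec_dotProduct]
  rw [glsAnnihilator, dotProduct_add, dotProduct_smul, sub_mulVec, dotProduct_sub, hcross,
    show V⁻¹ * X * Q * Xᵀ * V⁻¹ = V⁻¹ * X * Q * (Xᵀ * V⁻¹) by simp only [Matrix.mul_assoc],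
    ← mulVec_mulVec, hcross, ← mulVec_mulVec, smul_eq_mul]

theorem gls_quadratic_form_of_eigenvector [DecidableEq κ] (hVsymm : V.IsSymm) (hV : IsUnit V)
    (hXVX : IsUnit (Xᵀ * V⁻¹ * X)) (hQ : Q = (Xᵀ * V⁻¹ * X)⁻¹)
    {P : Matrix ι ι ℝ} (hP : P = glsAnnihilator V X Q)
    {a u b : ι → ℝ} {x xa xbar : κ → ℝ} {s e lam m γ : ℝ}
    (hVa : V *ᵥ a = s • u + e • a) (hVu : V *ᵥ u = lam • u) (hlam : lam ≠ 0)
    (haa : a ⬝ᵥ a = 1) (hau : a ⬝ᵥ u = 1) (huu : u ⬝ᵥ u = m)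
    (hXa : Xᵀ *ᵥ a = xa) (hXu : Xᵀ *ᵥ u = m • xbar)
    (hb : b = (V⁻¹ * X * Q) *ᵥ x + s • P *ᵥ u) (hγ : γ = s * m / lam) :
    (a + b) ⬝ᵥ V *ᵥ (a + b) = e + s * (3 + γ) + 2 * ((x - γ • xbar) ⬝ᵥ Q *ᵥ xa)
      + x ⬝ᵥ Q *ᵥ x - γ ^ 2 * (xbar ⬝ᵥ Q *ᵥ xbar) := by
  subst hP
  have hVdet := (isUnit_iff_isUnit_det V).mp hV
  have hVinv : V⁻¹.IsSymm := hVsymm.inv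
  have hQ1 : Xᵀ * V⁻¹ * X * Q = 1 :=
    hQ ▸ mul_nonsing_inv _ ((isUnit_iff_isUnit_det _).mp hXVX)
  have hQsymm : Q.IsSymm := hQ ▸ (isSymm_transpose_mul_mul X hVinv).inv
  have hViu : V⁻¹ *ᵥ u = lam⁻¹ • u := inv_mulVec_eq_inv_smul hV hlam hVu
  have hy : Xᵀ *ᵥ V⁻¹ *ᵥ u = (m / lam) • xbar := by
    rw [hViu, mulVec_smul, hXu, smul_smul, inv_mul_eq_div]
  have hXb : Xᵀ *ᵥ b = x := hb ▸ transpose_mulVec_add_glsAnnihilator_mulVec hQ1 x s u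
  have hVb : V *ᵥ b = X *ᵥ Q *ᵥ (x - γ • xbar) + s • u := by
    rw [hb, mulVec_add_glsAnnihilator_mulVec (mul_nonsing_inv _ hVdet), hy, smul_smul, hγ,
      mul_div_assoc]
  have hub : s * (u ⬝ᵥ b) = γ * (x ⬝ᵥ Q *ᵥ xbar) + s * γ - γ ^ 2 * (xbar ⬝ᵥ Q *ᵥ xbar) := by
    rw [hb, dotProduct_add_glsAnnihilator_mulVec hVinv, hy, hViu, dotProduct_smul, huu,
      hQsymm.dotProduct_mulVec_comm _ x, hγ]
    simp only [mulVec_smul, dotProduct_smul, smul_dotProduct, smul_eq_mul]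
    ring
  have haVa : a ⬝ᵥ V *ᵥ a = s + e := by
    rw [hVa, dotProduct_add, dotProduct_smul, dotProduct_smul, hau, haa, smul_eq_mul,
      smul_eq_mul, mul_one, mul_one]
  have haVb : a ⬝ᵥ V *ᵥ b = (x - γ • xbar) ⬝ᵥ Q *ᵥ xa + s := by
    rw [hVb, dotProduct_add, dotProduct_mulVec_eq_transpose_mulVec_dotProduct, hXa,
      hQsymm.dotProduct_mulVec_comm, dotProduct_smul, hau, smul_eq_mul, mul_one]
  have hbVb : b ⬝ᵥ V *ᵥ b = x ⬝ᵥ Q *ᵥ (x - γ • xbar) + s * (u ⬝ᵥ b) := by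
    rw [hVb, dotProduct_add, dotProduct_mulVec_eq_transpose_mulVec_dotProduct, hXb,
      dotProduct_smul, dotProduct_comm b, smul_eq_mul]
  rw [hVsymm.add_dotProduct_mulVec_add, haVa, haVb, hbVb, hub]
  simp only [mulVec_sub, mulVec_smul, dotProduct_sub, dotProduct_smul, smul_eq_mul]
  ring

end GLS

theorem posDef_smul_mul_transpose_add_smul_one_s13 {m n : Type*} [Fintype m] [DecidableEq m]
    [Fintype n] (Z : Matrix m n ℝ) {s e : ℝ} (hs : 0 ≤ s) (he : 0 < e) :
    (s • (Z * Zᵀ) + e • (1 : Matrix m m ℝ)).PosDef := by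
  have hZ : (Z * Zᵀ).PosSemidef := by
    simpa only [conjTranspose_eq_transpose_of_trivial] using posSemidef_self_mul_conjTranspose Z
  exact PosDef.posSemidef_add (hZ.smul hs) (PosDef.one.smul he)

section AreaIncidence

variable {α : Type*} [DecidableEq α]

def areaIncidence (β : α → Type*) : Matrix (Σ a, β a) α ℝ :=
  of fun k a => if k.1 = a then 1 else 0

variable {β : α → Type*}

@[simp]
theorem areaIncidence_apply (k : Σ a, β a) (a : α) :
    areaIncidence β k a = if k.1 = a then 1 else 0 :=
  rfl

variable [Fintype α]

theorem areaIncidence_mulVec (t : α → ℝ) : areaIncidence β *ᵥ t = fun k => t k.1 := by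
  ext k
  simp [mulVec, dotProduct]

variable [∀ a, Fintype (β a)]

theorem areaIncidence_transpose_mulVec (v : (Σ a, β a) → ℝ) :
    (areaIncidence β)ᵀ *ᵥ v = fun a => ∑ j, v ⟨a, j⟩ := by
  ext a
  simp only [mulVec, dotProduct, transpose_apply, areaIncidence_apply, Fintype.sum_sigma, ite_mul,
    one_mul, zero_mul]
  rw [Fintype.sum_eq_single a fun b hb => by simp [hb]]
  simp

theorem areaIncidence_transpose_mulVec_single [DecidableEq (Σ a, β a)] (k : Σ a, β a) :
    (areaIncidence β)ᵀ *ᵥ Pi.single k 1 = Pi.single k.1 1 := by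
  ext a
  simp [Pi.single_apply, eq_comm]

theorem dotProduct_areaIncidence_mulVec_single (v : (Σ a, β a) → ℝ) (a : α) :
    v ⬝ᵥ areaIncidence β *ᵥ Pi.single a 1 = ∑ j, v ⟨a, j⟩ := by
  rw [dotProduct_mulVec, ← mulVec_transpose, areaIncidence_transpose_mulVec]
  simp

theorem transpose_mulVec_areaIncidence_mulVec_single {κ : Type*}
    (X : Matrix (Σ a, β a) κ ℝ) (a : α) :
    Xᵀ *ᵥ (areaIncidence β *ᵥ Pi.single a 1) = ∑ j, X ⟨a, j⟩ := by
  ext p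
  rw [Finset.sum_apply, ← dotProduct_areaIncidence_mulVec_single (fun k => X k p)]
  rfl

variable [DecidableEq (Σ a, β a)]

variable (β) in
def nestedErrorCov (s e : ℝ) : Matrix (Σ a, β a) (Σ a, β a) ℝ :=
  s • (areaIncidence β * (areaIncidence β)ᵀ) + e • 1

theorem nestedErrorCov_mulVec_single (s e : ℝ) (k : Σ a, β a) :
    nestedErrorCov β s e *ᵥ Pi.single k 1
      = s • areaIncidence β *ᵥ Pi.single k.1 1 + e • Pi.single k 1 := by
  rw [nestedErrorCov, add_mulVec, smul_mulVec, smul_mulVec, one_mulVec, ← mulVec_mulVec,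
    areaIncidence_transpose_mulVec_single]

theorem nestedErrorCov_mulVec_areaIncidence_mulVec_single (s e : ℝ) (a : α) :
    nestedErrorCov β s e *ᵥ (areaIncidence β *ᵥ Pi.single a 1)
      = (s * Fintype.card (β a) + e) • areaIncidence β *ᵥ Pi.single a 1 := by
  have hZZ : (areaIncidence β)ᵀ *ᵥ (areaIncidence β *ᵥ Pi.single a 1)
      = (Fintype.card (β a) : ℝ) • Pi.single a 1 := by
    ext a'
    rcases eq_or_ne a' a with rfl | h
    · simp [areaIncidence_transpose_mulVec]
    · simp [areaIncidence_transpose_mulVec, h]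
  rw [nestedErrorCov, add_mulVec, smul_mulVec, smul_mulVec, one_mulVec, ← mulVec_mulVec, hZZ,
    mulVec_smul, smul_smul, add_smul]

end AreaIncidence

theorem quadratic_form_a_plus_b_general
    (D p : ℕ) (nds : Fin D → ℕ) (hnds : ∀ d, 1 ≤ nds d)
    (σu2 σe2 : ℝ) (hσu : 0 ≤ σu2) (hσe : 0 < σe2)
    (Xs : Matrix ((d : Fin D) × Fin (nds d)) (Fin p) ℝ)
    (Zs : Matrix ((d : Fin D) × Fin (nds d)) (Fin D) ℝ)
    (hZs : ∀ k d', Zs k d' = if k.1 = d' then 1 else 0)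
    (Vs : Matrix ((d : Fin D) × Fin (nds d)) ((d : Fin D) × Fin (nds d)) ℝ)
    (hVs : Vs = σu2 • (Zs * Zsᵀ) + σe2 • (1 : Matrix _ _ ℝ))
    (hXVX : IsUnit (Xsᵀ * Vs⁻¹ * Xs))
    (Qs : Matrix (Fin p) (Fin p) ℝ) (hQs : Qs = (Xsᵀ * Vs⁻¹ * Xs)⁻¹)
    (Ps : Matrix ((d : Fin D) × Fin (nds d)) ((d : Fin D) × Fin (nds d)) ℝ)
    (hPs : Ps = Vs⁻¹ - Vs⁻¹ * Xs * Qs * Xsᵀ * Vs⁻¹)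
    (d : Fin D) (i : Fin (nds d)) (xdj : Fin p → ℝ)
    (γd : ℝ) (hγ : γd = σu2 / (σu2 + σe2 / (nds d : ℝ)))
    (xbar : Fin p → ℝ)
    (hxbar : xbar = ((nds d : ℝ))⁻¹ • ∑ k : Fin (nds d), Xs ⟨d, k⟩)
    (adi : (d : Fin D) × Fin (nds d) → ℝ)
    (hadi : adi = Pi.single (⟨d, i⟩ : (d : Fin D) × Fin (nds d)) (1 : ℝ))
    (bdj : (d : Fin D) × Fin (nds d) → ℝ)
    (hbdj : bdj = (Vs⁻¹ * Xs * Qs).mulVec xdj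
        + σu2 • Ps.mulVec (Zs.mulVec (Pi.single d 1))) :
    (adi + bdj) ⬝ᵥ Vs.mulVec (adi + bdj)
      = σe2 + σu2 * (3 + γd)
          + 2 * ((xdj - γd • xbar) ⬝ᵥ Qs.mulVec (Xs ⟨d, i⟩))
          + xdj ⬝ᵥ Qs.mulVec xdj - γd ^ 2 * (xbar ⬝ᵥ Qs.mulVec xbar) := by
  have hn : (0 : ℝ) < nds d := by exact_mod_cast hnds d
  obtain rfl : Zs = areaIncidence _ := by ext k d'; exact hZs k d'
  have hVpos : Vs.PosDef := hVs ▸ posDef_smul_mul_transpose_add_smul_one_s13 _ hσu hσe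
  obtain rfl : Vs = nestedErrorCov _ σu2 σe2 := hVs
  refine gls_quadratic_form_of_eigenvector (lam := σu2 * nds d + σe2) (m := nds d)
    (isHermitian_iff_isSymm.mp hVpos.isHermitian) hVpos.isUnit hXVX hQs hPs
    ?_ ?_ (by positivity) ?_ ?_ ?_ ?_ ?_ hbdj ?_
  · rw [hadi, nestedErrorCov_mulVec_single]
  · rw [nestedErrorCov_mulVec_areaIncidence_mulVec_single, Fintype.card_fin]
  · simp [hadi]
  · simp [hadi]
  · rw [dotProduct_areaIncidence_mulVec_single, areaIncidence_mulVec]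
    simp
  · ext p
    simp [hadi]
  · rw [transpose_mulVec_areaIncidence_mulVec_single, hxbar, smul_smul, mul_inv_cancel₀ hn.ne',
      one_smul]
  · rw [hγ]
    field_simp

/-- In the multi-area nested-error matrix model, for a sampled unit `i` of area `d` with
indicator vector `a_{di}` and any `x_{dj}`,
`(a_{di}+b_{dj})' V_s (a_{di}+b_{dj}) = σe² + σu²(3+γ_d) + 2(x_{dj} − γ_d x̄_{ds})' Q_s x_{di}
  + x_{dj}' Q_s x_{dj} − γ_d² x̄_{ds}' Q_s x̄_{ds}`. -/
theorem quadratic_form_a_plus_b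
    (D p : ℕ) (hD : 0 < D) (nds : Fin D → ℕ) (hnds : ∀ d, 1 ≤ nds d)
    (σu2 σe2 : ℝ) (hσu : 0 ≤ σu2) (hσe : 0 < σe2)
    (Xs : Matrix ((d : Fin D) × Fin (nds d)) (Fin p) ℝ)
    (Zs : Matrix ((d : Fin D) × Fin (nds d)) (Fin D) ℝ)
    (hZs : ∀ k d', Zs k d' = if k.1 = d' then 1 else 0)
    (Vs : Matrix ((d : Fin D) × Fin (nds d)) ((d : Fin D) × Fin (nds d)) ℝ)
    (hVs : Vs = σu2 • (Zs * Zsᵀ) + σe2 • (1 : Matrix _ _ ℝ))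
    (hXVX : IsUnit (Xsᵀ * Vs⁻¹ * Xs))
    (Qs : Matrix (Fin p) (Fin p) ℝ) (hQs : Qs = (Xsᵀ * Vs⁻¹ * Xs)⁻¹)
    (Ps : Matrix ((d : Fin D) × Fin (nds d)) ((d : Fin D) × Fin (nds d)) ℝ)
    (hPs : Ps = Vs⁻¹ - Vs⁻¹ * Xs * Qs * Xsᵀ * Vs⁻¹)
    (d : Fin D) (i : Fin (nds d)) (xdj : Fin p → ℝ)
    (γd : ℝ) (hγ : γd = σu2 / (σu2 + σe2 / (nds d : ℝ)))
    (xbar : Fin p → ℝ)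
    (hxbar : xbar = ((nds d : ℝ))⁻¹ • ∑ k : Fin (nds d), Xs ⟨d, k⟩)
    (adi : (d : Fin D) × Fin (nds d) → ℝ)
    (hadi : adi = Pi.single (⟨d, i⟩ : (d : Fin D) × Fin (nds d)) (1 : ℝ))
    (bdj : (d : Fin D) × Fin (nds d) → ℝ)
    (hbdj : bdj = (Vs⁻¹ * Xs * Qs).mulVec xdj
        + σu2 • Ps.mulVec (Zs.mulVec (Pi.single d 1))) :
    (adi + bdj) ⬝ᵥ Vs.mulVec (adi + bdj)
      = σe2 + σu2 * (3 + γd)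
          + 2 * ((xdj - γd • xbar) ⬝ᵥ Qs.mulVec (Xs ⟨d, i⟩))
          + xdj ⬝ᵥ Qs.mulVec xdj - γd ^ 2 * (xbar ⬝ᵥ Qs.mulVec xbar) :=
  quadratic_form_a_plus_b_general D p nds hnds σu2 σe2 hσu hσe Xs Zs hZs Vs hVs hXVX Qs hQs Ps hPs d
    i xdj γd hγ xbar hxbar adi hadi bdj hbdj
end
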